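/- arXiv:1601.02928 — 8 statements merged into one kernel-verified Lean document; each statement's English description precedes it below -/
import Mathlib

section
/- Let σ be a permutation of size n and (D,w) = ψ_FV(σ) its image under the Françon–Viennot map. Then tw(D,w) = tot(σ), GC(D,w) = GC(σ), and DC(D,w) = Rec(σ). -/
open scoped Classical
noncomputable section

/-- Value of `σ` at the 1-indexed position `j`, with the convention that positions
outside `[1,n]` (in particular positions `0` and `n+1`) carry the value `0`. -/
def pval (n : ℕ) (σ : Equiv.Perm (Fin n)) (j : ℕ) : ℕ :=
  if h : 1 ≤ j ∧ j ≤ n then ((σ ⟨j - 1, by omega⟩ : Fin n) : ℕ) + 1 else 0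
/-- Value of `σ` at the 1-indexed position `j`, with the conventions `σ_0 = 0` and
`σ_{n+1} = n+1`. -/
def pval1 (n : ℕ) (σ : Equiv.Perm (Fin n)) (j : ℕ) : ℕ :=
  if j = 0 then 0 else if j ≤ n then pval n σ j else n + 1
/-- The (1-indexed) position of a value `v ∈ [1,n]` in `σ`. -/
def ppos (n : ℕ) (σ : Equiv.Perm (Fin n)) (v : ℕ) : ℕ :=
  if h : 1 ≤ v ∧ v ≤ n then ((σ.symm ⟨v - 1, by omega⟩ : Fin n) : ℕ) + 1 else 0
/-- Number of 31-2 patterns of `σ`. -/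
def tot (n : ℕ) (σ : Equiv.Perm (Fin n)) : ℕ :=
  ((Finset.Icc 1 n ×ˢ Finset.Icc 1 n).filter (fun p =>
    p.1 + 1 < p.2 ∧ pval n σ (p.1 + 1) < pval n σ p.2 ∧ pval n σ p.2 < pval n σ p.1)).card
/-- Number of 31-2 patterns of `σ` in which the value `k` plays the role of the `2`. -/
def totk (n : ℕ) (σ : Equiv.Perm (Fin n)) (k : ℕ) : ℕ :=
  ((Finset.Icc 1 n ×ˢ Finset.Icc 1 n).filter (fun p =>
    p.1 + 1 < p.2 ∧ pval n σ (p.1 + 1) < pval n σ p.2 ∧ pval n σ p.2 < pval n σ p.1 ∧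
      pval n σ p.2 = k)).card
/-- The set of recoils of `σ`: values `i` such that `i+1` is to the left of `i`. -/
def recSet (n : ℕ) (σ : Equiv.Perm (Fin n)) : Finset ℕ :=
  (Finset.Ico 1 n).filter (fun i => ppos n σ (i + 1) < ppos n σ i)
/-- The Genocchi descent set of `σ`: values immediately followed by a smaller value. -/
def gdesSet (n : ℕ) (σ : Equiv.Perm (Fin n)) : Finset ℕ :=
  (Finset.Icc 1 n).filter (fun v => pval1 n σ (ppos n σ v + 1) < v)
/-- Descent set of the Genocchi composition of descents `GC(σ)`. -/
def gcSet (n : ℕ) (σ : Equiv.Perm (Fin n)) : Finset ℕ :=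
  (gdesSet n σ).image (· - 1)
/-- Height of the path `D` (steps indexed by `[1, …]`, `true` = up-step) after `j` steps. -/
def hgt (D : ℕ → Bool) (j : ℕ) : ℤ :=
  ∑ t ∈ Finset.Icc 1 j, (if D t then (1 : ℤ) else -1)
/-- `D` is a Dyck path of size `n`: `2n` relevant steps (positions `1,…,2n`), never going
below the horizontal axis and ending on it; steps outside `[1,2n]` are normalized to `false`. -/
def IsDyckPath (n : ℕ) (D : ℕ → Bool) : Prop :=
  (∀ j, j ≤ 2 * n → 0 ≤ hgt D j) ∧ hgt D (2 * n) = 0 ∧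
    ∀ j, j = 0 ∨ 2 * n < j → D j = false
/-- `(D, w)` is a weighted Dyck path of size `n`: `w i ≤ (h_i - 1)/2` where `h_i` is the
height of the meeting point of steps `2i-1` and `2i`; `w` is normalized outside `[1,n]`. -/
def IsWDP (n : ℕ) (D : ℕ → Bool) (w : ℕ → ℕ) : Prop :=
  IsDyckPath n D ∧ (∀ i, 1 ≤ i → i ≤ n → 2 * (w i : ℤ) + 1 ≤ hgt D (2 * i - 1)) ∧
    ∀ i, i = 0 ∨ n < i → w i = 0
/-- Total weight of a weighted Dyck path. -/
def twW (n : ℕ) (w : ℕ → ℕ) : ℕ := ∑ i ∈ Finset.Icc 1 n, w i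
/-- Descent set of a weighted Dyck path. -/
def dcSetW (n : ℕ) (D : ℕ → Bool) (w : ℕ → ℕ) : Finset ℕ :=
  (Finset.Ico 1 n).filter (fun i => w (i + 1) < w i ∨ (w i = w (i + 1) ∧ D (2 * i) = true))
/-- Genocchi descent set of a weighted Dyck path. -/
def gdesSetW (n : ℕ) (D : ℕ → Bool) : Finset ℕ :=
  (Finset.Icc 2 n).filter (fun i => D (2 * i - 1) = false)
/-- Descent set of the Genocchi composition of descents of a weighted Dyck path. -/
def gcSetW (n : ℕ) (D : ℕ → Bool) : Finset ℕ :=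
  (gdesSetW n D).image (· - 1)
/-- Genocchi descent set of type 0 of a weighted Dyck path. -/
def gdes0SetW (n : ℕ) (D : ℕ → Bool) : Finset ℕ :=
  (Finset.Ico 1 n).filter (fun i => D (2 * i) = false)
/-- Descent set of type 0 of a weighted Dyck path. -/
def dc0SetW (n : ℕ) (D : ℕ → Bool) (w : ℕ → ℕ) : Finset ℕ :=
  (Finset.Ico 1 n).filter (fun i =>
    w (i + 1) < w i ∨ (w i = w (i + 1) ∧ D (2 * i + 1) = true))

/-! ### The Françon–Viennot bijection -/
/-- The Dyck path of the Françon–Viennot map (conventions `σ_0 = 0`, `σ_{n+1} = n+1`):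
for `k = σ_j`, step `2k-1` is up iff `σ_j < σ_{j+1}` and step `2k` is up iff
`¬ (σ_{j-1} < σ_j)`. -/
def fvPath (n : ℕ) (σ : Equiv.Perm (Fin n)) : ℕ → Bool := fun m =>
  if 1 ≤ m ∧ m ≤ 2 * n then
    if m % 2 = 1 then
      if pval1 n σ (ppos n σ ((m + 1) / 2)) < pval1 n σ (ppos n σ ((m + 1) / 2) + 1)
        then true else false
    else
      if pval1 n σ (ppos n σ (m / 2) - 1) < pval1 n σ (ppos n σ (m / 2))
        then false else true
  else false
/-- The weight of the Françon–Viennot map: `w k = tot_k σ`. -/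
def fvWeight (n : ℕ) (σ : Equiv.Perm (Fin n)) : ℕ → ℕ := fun k =>
  if 1 ≤ k ∧ k ≤ n then totk n σ k else 0

/-!
Under `ψ_FV` the weight of the step of value `k` counts the 31-2 patterns whose `2` is `k`,
so the weights sum to `tot σ`; and the odd step `2k-1` is a down-step exactly when `k` is
followed by a smaller value, which gives `GC`.

For `DC`, let `S_k` be the set of positions `i` such that `(i, pos k)` is a 31-2 pattern.
If `k` is a recoil then `S_{k+1} ⊆ S_k`, strictly when `k` is preceded by a smaller value:
the last value larger than `k` between `k+1` and `k` is followed by a value smaller than `k`.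
If `k` is not a recoil then `S_k ⊆ S_{k+1}`, strictly when `k` is preceded by a larger value,
whose position starts a pattern for `k+1` but not for `k`. Since the even step `2k` is an
up-step exactly when `k` is preceded by a larger value, this is the descent condition of `DC`.
-/

open Finset

theorem Nat.exists_le_lt_and_not_succ {P : ℕ → Prop} {a b : ℕ} (hab : a ≤ b) (ha : P a)
    (hb : ¬ P b) : ∃ m, a ≤ m ∧ m < b ∧ P m ∧ ¬ P (m + 1) := by
  induction b, hab using Nat.le_induction with
  | base => exact absurd ha hb
  | succ b hab ih =>
    by_cases hPb : P b
    · exact ⟨b, hab, b.lt_succ_self, hPb, hb⟩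
    · obtain ⟨m, ham, hmb, hPm, hPm'⟩ := ih hPb
      exact ⟨m, ham, hmb.trans b.lt_succ_self, hPm, hPm'⟩

section
variable {n : ℕ} (σ : Equiv.Perm (Fin n))

lemma pval_le (j : ℕ) : pval n σ j ≤ n := by
  unfold pval
  split
  · exact (σ _).isLt
  · exact n.zero_le

@[simp] lemma pval_zero : pval n σ 0 = 0 := by
  simp [pval]

lemma ppos_pos {k : ℕ} (hk1 : 1 ≤ k) (hk2 : k ≤ n) : 1 ≤ ppos n σ k := by
  simp [ppos, hk1, hk2]

lemma ppos_le {k : ℕ} (hk1 : 1 ≤ k) (hk2 : k ≤ n) : ppos n σ k ≤ n := by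
  simp only [ppos, hk1, hk2, and_self, dif_pos]
  exact (σ.symm _).isLt

lemma pval_eq_iff {j k : ℕ} (hj1 : 1 ≤ j) (hj2 : j ≤ n) (hk1 : 1 ≤ k) (hk2 : k ≤ n) :
    pval n σ j = k ↔ ppos n σ k = j := by
  simp only [pval, ppos, hj1, hj2, hk1, hk2, and_self, dif_pos]
  constructor <;> rintro rfl <;> simp <;> omega

lemma pval_ppos {k : ℕ} (hk1 : 1 ≤ k) (hk2 : k ≤ n) : pval n σ (ppos n σ k) = k :=
  (pval_eq_iff σ (ppos_pos σ hk1 hk2) (ppos_le σ hk1 hk2) hk1 hk2).2 rfl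

lemma pval_ne_of_ne_ppos {j k : ℕ} (hk1 : 1 ≤ k) (hk2 : k ≤ n) (hj : j ≠ ppos n σ k) :
    pval n σ j ≠ k := by
  intro h
  have hj1 : 1 ≤ j := by
    by_contra h0
    simp [show j = 0 by omega] at h
    omega
  have hj2 : j ≤ n := by
    by_contra h0
    simp [pval, h0] at h
    omega
  exact hj ((pval_eq_iff σ hj1 hj2 hk1 hk2).1 h).symm

lemma pval1_ne_of_ne_ppos {j k : ℕ} (hk1 : 1 ≤ k) (hk2 : k ≤ n) (hj : j ≠ ppos n σ k) :
    pval1 n σ j ≠ k := by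
  unfold pval1
  split_ifs
  · omega
  · exact pval_ne_of_ne_ppos σ hk1 hk2 hj
  · omega

lemma pval1_eq_pval {j : ℕ} (hj : j ≤ n) : pval1 n σ j = pval n σ j := by
  rcases j.eq_zero_or_pos with rfl | hj0
  · simp [pval1]
  · simp [pval1, hj, hj0.ne']

lemma one_le_pval1 {j : ℕ} (hj : 1 ≤ j) : 1 ≤ pval1 n σ j := by
  simp only [pval1, pval, show j ≠ 0 by omega, hj, true_and, if_false]
  split_ifs <;> omega

lemma fvPath_two_mul_sub_one_eq_false_iff {k : ℕ} (hk1 : 1 ≤ k) (hk2 : k ≤ n) :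
    fvPath n σ (2 * k - 1) = false ↔ pval1 n σ (ppos n σ k + 1) < k := by
  have hk : (2 * k - 1 + 1) / 2 = k := by omega
  simp only [fvPath, hk, pval1_eq_pval σ (ppos_le σ hk1 hk2), pval_ppos σ hk1 hk2]
  rw [if_pos (by omega), if_pos (by omega)]
  have := pval1_ne_of_ne_ppos σ hk1 hk2 (j := ppos n σ k + 1) (by omega)
  split_ifs <;> simp <;> omega

lemma fvPath_two_mul_eq_true_iff {k : ℕ} (hk1 : 1 ≤ k) (hk2 : k ≤ n) :
    fvPath n σ (2 * k) = true ↔ k < pval n σ (ppos n σ k - 1) := by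
  have hk : 2 * k / 2 = k := by omega
  simp only [fvPath, hk, pval1_eq_pval σ (ppos_le σ hk1 hk2), pval_ppos σ hk1 hk2,
    pval1_eq_pval σ ((ppos n σ k).sub_le 1 |>.trans (ppos_le σ hk1 hk2))]
  rw [if_pos (by omega), if_neg (by omega)]
  have := pval_ne_of_ne_ppos σ hk1 hk2 (j := ppos n σ k - 1) (by have := ppos_pos σ hk1 hk2; omega)
  split_ifs <;> simp <;> omega

theorem twW_fvWeight : twW n (fvWeight n σ) = tot n σ := by
  rw [tot, card_eq_sum_card_fiberwise (f := fun p => pval n σ p.2) (t := Icc 1 n)]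
  · refine sum_congr rfl fun k hk => ?_
    rw [mem_Icc] at hk
    simp only [fvWeight, hk, and_self, if_true, totk, filter_filter, and_assoc]
  · intro p hp
    simp only [coe_filter, mem_product, mem_Icc, Set.mem_ofPred_eq] at hp
    simp only [coe_Icc, Set.mem_Icc, pval_le, and_true]
    omega

theorem gdesSetW_fvPath : gdesSetW n (fvPath n σ) = gdesSet n σ := by
  ext k
  simp only [gdesSetW, gdesSet, mem_filter, mem_Icc]
  constructor
  · rintro ⟨⟨hk2, hkn⟩, hD⟩
    exact ⟨⟨by omega, hkn⟩, (fvPath_two_mul_sub_one_eq_false_iff σ (by omega) hkn).1 hD⟩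
  · rintro ⟨⟨hk1, hkn⟩, hlt⟩
    have := one_le_pval1 σ (j := ppos n σ k + 1) (by omega)
    exact ⟨⟨by omega, hkn⟩, (fvPath_two_mul_sub_one_eq_false_iff σ hk1 hkn).2 hlt⟩

theorem gcSetW_fvPath : gcSetW n (fvPath n σ) = gcSet n σ := by
  rw [gcSetW, gcSet, gdesSetW_fvPath]

def patternStarts (k : ℕ) : Finset ℕ :=
  (Icc 1 n).filter fun i => i + 1 < ppos n σ k ∧ pval n σ (i + 1) < k ∧ k < pval n σ i

lemma fvWeight_eq_card_patternStarts {k : ℕ} (hk1 : 1 ≤ k) (hk2 : k ≤ n) :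
    fvWeight n σ k = #(patternStarts σ k) := by
  rw [fvWeight, if_pos ⟨hk1, hk2⟩, totk,
    ← card_map (s := patternStarts σ k) ⟨fun i => (i, ppos n σ k), fun _ _ h => (Prod.ext_iff.1 h).1⟩]
  refine congrArg card ?_
  ext ⟨i, j⟩
  simp only [patternStarts, mem_filter, mem_product, mem_Icc, mem_map]
  constructor
  · rintro ⟨⟨hi, hj1, hj2⟩, hij, h1, h2, hjk⟩
    obtain rfl := (pval_eq_iff σ hj1 hj2 hk1 hk2).1 hjk
    rw [hjk] at h1 h2
    exact ⟨i, ⟨hi, hij, h1, h2⟩, rfl⟩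
  · rintro ⟨i, ⟨hi, hij, h1, h2⟩, ⟨⟩⟩
    rw [pval_ppos σ hk1 hk2]
    exact ⟨⟨hi, ppos_pos σ hk1 hk2, ppos_le σ hk1 hk2⟩, hij, h1, h2, rfl⟩

lemma patternStarts_succ_subset {k : ℕ} (hk1 : 1 ≤ k) (hk2 : k + 1 ≤ n)
    (h : ppos n σ (k + 1) < ppos n σ k) : patternStarts σ (k + 1) ⊆ patternStarts σ k := by
  intro i hi
  simp only [patternStarts, mem_filter] at hi ⊢
  obtain ⟨hin, hiq, h1, h2⟩ := hi
  have := pval_ne_of_ne_ppos σ hk1 (by omega) (j := i + 1) (by omega)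
  exact ⟨hin, by omega, by omega, by omega⟩

lemma patternStarts_subset_succ {k : ℕ} (hk1 : 1 ≤ k) (hk2 : k + 1 ≤ n)
    (h : ppos n σ k < ppos n σ (k + 1)) : patternStarts σ k ⊆ patternStarts σ (k + 1) := by
  intro i hi
  simp only [patternStarts, mem_filter] at hi ⊢
  obtain ⟨hin, hip, h1, h2⟩ := hi
  have := pval_ne_of_ne_ppos σ (k := k + 1) (by omega) hk2 (j := i) (by omega)
  exact ⟨hin, by omega, by omega, by omega⟩

lemma card_patternStarts_succ_lt {k : ℕ} (hk1 : 1 ≤ k) (hk2 : k + 1 ≤ n)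
    (h : ppos n σ (k + 1) < ppos n σ k) (hprev : pval n σ (ppos n σ k - 1) < k) :
    #(patternStarts σ (k + 1)) < #(patternStarts σ k) := by
  set p := ppos n σ k
  set q := ppos n σ (k + 1)
  have hq : pval n σ q = k + 1 := pval_ppos σ (by omega) hk2
  have hq1 : 1 ≤ q := ppos_pos σ (by omega) hk2
  have hpn : p ≤ n := ppos_le σ hk1 (by omega)
  have hqp : q ≠ p - 1 := by
    rintro hqp
    rw [hqp] at hq
    omega
  obtain ⟨i, hqi, hip, hi, hi'⟩ := Nat.exists_le_lt_and_not_succ (P := fun i => k < pval n σ i)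
    (a := q) (b := p - 1) (by omega) (by omega) (by omega)
  have := pval_ne_of_ne_ppos σ hk1 (by omega) (j := i + 1) (by omega)
  have hmem : i ∈ patternStarts σ k := by
    simp only [patternStarts, mem_filter, mem_Icc]
    omega
  refine card_lt_card ⟨patternStarts_succ_subset σ hk1 hk2 h, fun hsub => ?_⟩
  have := hsub hmem
  simp only [patternStarts, mem_filter] at this
  omega

lemma card_patternStarts_lt_succ {k : ℕ} (hk1 : 1 ≤ k) (hk2 : k + 1 ≤ n)
    (h : ppos n σ k < ppos n σ (k + 1)) (hprev : k < pval n σ (ppos n σ k - 1)) :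
    #(patternStarts σ k) < #(patternStarts σ (k + 1)) := by
  set p := ppos n σ k
  have hp : pval n σ p = k := pval_ppos σ hk1 (by omega)
  have hpn : p ≤ n := ppos_le σ hk1 (by omega)
  have hp2 : 2 ≤ p := by
    by_contra hp2
    rw [show p - 1 = 0 by omega, pval_zero] at hprev
    omega
  have := pval_ne_of_ne_ppos σ (k := k + 1) (by omega) hk2 (j := p - 1) (by omega)
  have hmem : p - 1 ∈ patternStarts σ (k + 1) := by
    simp only [patternStarts, mem_filter, mem_Icc, Nat.sub_add_cancel (by omega : 1 ≤ p), hp]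
    omega
  refine card_lt_card ⟨patternStarts_subset_succ σ hk1 hk2 h, fun hsub => ?_⟩
  have := hsub hmem
  simp only [patternStarts, mem_filter] at this
  omega

theorem dcSetW_fvPath_fvWeight : dcSetW n (fvPath n σ) (fvWeight n σ) = recSet n σ := by
  ext k
  simp only [dcSetW, recSet, mem_filter, mem_Ico, and_congr_right_iff]
  rintro ⟨hk1, hkn⟩
  rw [fvWeight_eq_card_patternStarts σ hk1 hkn.le, fvWeight_eq_card_patternStarts σ (k := k + 1) (by omega) hkn,
    fvPath_two_mul_eq_true_iff σ hk1 hkn.le]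
  have hpos : ppos n σ (k + 1) ≠ ppos n σ k := fun h => by
    have := pval_ppos σ (k := k + 1) (by omega) hkn
    rw [h, pval_ppos σ hk1 hkn.le] at this
    omega
  have hprev : pval n σ (ppos n σ k - 1) ≠ k :=
    pval_ne_of_ne_ppos σ hk1 hkn.le (by have := ppos_pos σ hk1 hkn.le; omega)
  rcases hpos.lt_or_gt with hrec | hrec
  · have := card_le_card (patternStarts_succ_subset σ hk1 hkn hrec)
    rcases hprev.lt_or_gt with hlt | hgt
    · have := card_patternStarts_succ_lt σ hk1 hkn hrec hlt
      omega
    · omega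
  · have := card_le_card (patternStarts_subset_succ σ hk1 hkn hrec)
    have := card_patternStarts_lt_succ σ hk1 hkn hrec
    omega

end

/-- Proposition: for `(D, w) = ψ_FV(σ)` one has `tw (D,w) = tot σ`,
`GC (D,w) = GC σ` and `DC (D,w) = Rec σ` (compositions identified with their
descent sets). -/
theorem stats_through_FV (n : ℕ) (σ : Equiv.Perm (Fin n)) :
    twW n (fvWeight n σ) = tot n σ ∧
    gcSetW n (fvPath n σ) = gcSet n σ ∧
    dcSetW n (fvPath n σ) (fvWeight n σ) = recSet n σ :=
  ⟨twW_fvWeight σ, gcSetW_fvPath σ, dcSetW_fvPath_fvWeight σ⟩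
end
end

section
/- Let (D,w) be a weighted Dyck path of size n. Then tw(ψ(D,w)) = tw(D,w), GC^0(ψ(D,w)) = GC(D,w), and DC^0(ψ(D,w)) = DC(D,w). -/
open scoped Classical
noncomputable section

/-! ### The Françon–Viennot bijection -/
/-- The involution `ψ` on Dyck paths of size `n`: every pair of steps (up,down) or
(down,up) at positions `(2i, 2i+1)` is exchanged. -/
def psiStep (n : ℕ) (D : ℕ → Bool) : ℕ → Bool := fun j =>
  if j % 2 = 0 ∧ 2 ≤ j ∧ j + 1 ≤ 2 * n ∧ D j ≠ D (j + 1) then D (j + 1)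
  else if j % 2 = 1 ∧ 3 ≤ j ∧ j + 1 ≤ 2 * n ∧ D (j - 1) ≠ D j then D (j - 1)
  else D j

/-! ### The sorting bijection φ₁ -/

lemma psi_even (n : ℕ) (D : ℕ → Bool) (i : ℕ) (h1 : 1 ≤ i) (h2 : 2 * i + 1 ≤ 2 * n) :
    psiStep n D (2 * i) = D (2 * i + 1) := by
  unfold psiStep
  by_cases hd : D (2 * i) = D (2 * i + 1)
  · simp [hd]
  · simp [hd, Nat.mul_mod_right, h2, Nat.le_mul_of_pos_right 2 h1]

lemma psi_odd (n : ℕ) (D : ℕ → Bool) (i : ℕ) (h1 : 1 ≤ i) (h2 : 2 * i + 2 ≤ 2 * n) :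
    psiStep n D (2 * i + 1) = D (2 * i) := by
  unfold psiStep
  have hmod : (2 * i + 1) % 2 = 1 := by omega
  by_cases hd : D (2 * i) = D (2 * i + 1)
  · simp [hd, hmod]
  · have h3 : 3 ≤ 2 * i + 1 := by omega
    simp [hd, hmod, h3, show 2 * i + 1 + 1 ≤ 2 * n from by omega,
      show 2 * i + 1 - 1 = 2 * i from rfl, Ne.symm hd]

/-- Proposition: for a weighted Dyck path `(D, w)` of size `n`,
`tw (ψ(D,w)) = tw (D,w)`, `GC⁰ (ψ(D,w)) = GC (D,w)` and `DC⁰ (ψ(D,w)) = DC (D,w)`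
(compositions identified with their descent sets; `ψ` keeps the weight unchanged). -/
theorem stats_through_psi (n : ℕ) (D : ℕ → Bool) (w : ℕ → ℕ) (h : IsWDP n D w) :
    twW n w = twW n w ∧
    gdes0SetW n (psiStep n D) = gcSetW n D ∧
    dc0SetW n (psiStep n D) w = dcSetW n D w := by
  refine ⟨rfl, ?_, ?_⟩
  · ext j
    simp only [gdes0SetW, gcSetW, gdesSetW, Finset.mem_image, Finset.mem_filter,
      Finset.mem_Ico, Finset.mem_Icc]
    constructor
    · rintro ⟨⟨hj1, hj2⟩, hf⟩
      refine ⟨j + 1, ⟨⟨by omega, by omega⟩, ?_⟩, by omega⟩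
      rw [show 2 * (j + 1) - 1 = 2 * j + 1 from by omega, ← psi_even n D j hj1 (by omega), hf]
    · rintro ⟨i, ⟨⟨hi1, hi2⟩, hf⟩, rfl⟩
      obtain ⟨j, rfl⟩ : ∃ j, i = j + 1 := ⟨i - 1, by omega⟩
      refine ⟨⟨by omega, by omega⟩, ?_⟩
      rw [show j + 1 - 1 = j from rfl, psi_even n D j (by omega) (by omega)]
      rw [show 2 * (j + 1) - 1 = 2 * j + 1 from by omega] at hf
      exact hf
  · ext i
    simp only [dc0SetW, dcSetW, Finset.mem_filter, Finset.mem_Ico]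
    constructor
    · rintro ⟨⟨hi1, hi2⟩, hf⟩
      refine ⟨⟨hi1, hi2⟩, ?_⟩
      rwa [psi_odd n D i hi1 (by omega)] at hf
    · rintro ⟨⟨hi1, hi2⟩, hf⟩
      refine ⟨⟨hi1, hi2⟩, ?_⟩
      rwa [psi_odd n D i hi1 (by omega)]
end
end

section
/- For every subexcedent function u of size n, the sorting algorithm φ1 terminates, and its output φ1(u) = (v,w) is a decreasing subexcedent function v of size n together with a valid weight w for v. -/
open scoped Classical
noncomputable section

/-- A subexcedent function of size `n`: `u j ≤ n - j` for `j ∈ [1,n]`, `u` vanishing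
outside of `[1,n]`. -/
def IsSubexc (n : ℕ) (u : ℕ → ℕ) : Prop :=
  (∀ j, 1 ≤ j → j ≤ n → u j ≤ n - j) ∧ ∀ j, j = 0 ∨ n < j → u j = 0
/-- A subexcedent function is decreasing if its nonzero values decrease strictly. -/
def IsDecr (n : ℕ) (u : ℕ → ℕ) : Prop :=
  ∀ i j, 1 ≤ i → i < j → j ≤ n → 0 < u i → 0 < u j → u j < u i
/-- Maximal allowed weight at position `k` for a decreasing subexcedent function `u`:
the number of positions `i < k` with `0 < u i ≤ n - k`. -/
def maxW (n : ℕ) (u : ℕ → ℕ) (k : ℕ) : ℕ :=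
  ((Finset.Ico 1 k).filter (fun i => 0 < u i ∧ u i ≤ n - k)).card
/-- A valid weight for a decreasing subexcedent function. -/
def IsValidW (n : ℕ) (u w : ℕ → ℕ) : Prop :=
  (∀ k, 1 ≤ k → k ≤ n → w k ≤ maxW n u k) ∧ ∀ k, k = 0 ∨ n < k → w k = 0
/-- Positions `k` of `u` having a smaller or equal nonzero value to their left;
the pivot of the sorting algorithm is the largest value at such positions. -/
def pivotPositions (n : ℕ) (u : ℕ → ℕ) : Finset ℕ :=
  (Finset.Icc 1 n).filter (fun k => ∃ j, 1 ≤ j ∧ j < k ∧ 0 < u j ∧ u j ≤ u k)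
/-- One exchange of the sorting algorithm φ₁: the pivot `p` is the greatest value of `u`
having an occurrence with a smaller or equal nonzero value to its left, `k` is the
position of its rightmost occurrence, `i` is the position of the rightmost occurrence of
the largest value `≤ p` to the left of `k`; `u i` is decremented then `u i, u k` are
swapped and `w k` is incremented.  Returns `none` when no pivot exists. -/
def phi1Step (n : ℕ) (s : (ℕ → ℕ) × (ℕ → ℕ)) : Option ((ℕ → ℕ) × (ℕ → ℕ)) :=
  if (pivotPositions n s.1).Nonempty then
    let p := ((pivotPositions n s.1).image s.1).sup id
    let k := ((Finset.Icc 1 n).filter (fun x => s.1 x = p)).sup id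
    let m := (((Finset.Ico 1 k).filter (fun j => 0 < s.1 j ∧ s.1 j ≤ p)).image s.1).sup id
    let i := ((Finset.Ico 1 k).filter (fun j => s.1 j = m)).sup id
    some (Function.update (Function.update s.1 i (s.1 k)) k (s.1 i - 1),
      Function.update s.2 k (s.2 k + 1))
  else none
/-- Iterate `phi1Step` at most `m` times, stopping when no pivot exists. -/
def phi1Iter (n : ℕ) : ℕ → (ℕ → ℕ) × (ℕ → ℕ) → (ℕ → ℕ) × (ℕ → ℕ)
  | 0, s => s
  | m + 1, s =>
    match phi1Step n s with
    | none => s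
    | some s' => phi1Iter n m s'
/-- The map φ₁: run the sorting algorithm starting from `(u, 0)`.  Each exchange
decreases `∑ u` by exactly one, so `∑ u + 1` iterations always suffice to reach the
final state. -/
def phi1 (n : ℕ) (u : ℕ → ℕ) : (ℕ → ℕ) × (ℕ → ℕ) :=
  phi1Iter n ((∑ j ∈ Finset.Icc 1 n, u j) + 1) (u, fun _ => 0)

/-! Each exchange lowers `∑ u` by one, so the algorithm stops after at most `∑ u` exchanges,
and a state without pivot is decreasing. For the weights, the invariant is that `w k` is at
most the number of distinct values in `(u k, n - k]` occurring left of `k` that are at least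
the current pivot. The pivot never increases. An exchange at `k` moves the pivot value `p = u k`
to the left of `k`, where it was not counted before, and at every other position each counted
value still occurs to the left after the exchange. At the end this count is at most `maxW`. -/

namespace Phi1

open Finset

lemma sup_id_filter_spec {s : Finset ℕ} {P : ℕ → Prop} [DecidablePred P] {a : ℕ}
    (ha : a ∈ s) (hPa : P a) :
    (s.filter P).sup id ∈ s ∧ P ((s.filter P).sup id) ∧
      ∀ x ∈ s, P x → x ≤ (s.filter P).sup id := by
  obtain ⟨x, hx, hsup⟩ := exists_mem_eq_sup _ ⟨a, mem_filter.2 ⟨ha, hPa⟩⟩ id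
  rw [hsup]
  exact ⟨(mem_filter.1 hx).1, (mem_filter.1 hx).2,
    fun y hy hPy => hsup ▸ le_sup (f := id) (mem_filter.2 ⟨hy, hPy⟩)⟩

lemma sup_image_spec {s : Finset ℕ} (f : ℕ → ℕ) (hs : s.Nonempty) :
    (∃ x ∈ s, f x = (s.image f).sup id) ∧ ∀ x ∈ s, f x ≤ (s.image f).sup id := by
  rw [sup_image, Function.id_comp]
  obtain ⟨x, hx, hsup⟩ := exists_mem_eq_sup s hs f
  exact ⟨⟨x, hx, hsup.symm⟩, fun y hy => le_sup hy⟩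

def pivotValue (n : ℕ) (u : ℕ → ℕ) : ℕ := ((pivotPositions n u).image u).sup id

lemma mem_pivotPositions {n x : ℕ} {u : ℕ → ℕ} :
    x ∈ pivotPositions n u ↔
      (1 ≤ x ∧ x ≤ n) ∧ ∃ j, 1 ≤ j ∧ j < x ∧ 0 < u j ∧ u j ≤ u x := by
  simp [pivotPositions]

lemma le_pivotValue {n x : ℕ} {u : ℕ → ℕ} (hx : x ∈ pivotPositions n u) :
    u x ≤ pivotValue n u :=
  le_sup (f := id) (mem_image_of_mem u hx)

lemma isDecr_of_not_nonempty {n : ℕ} {u : ℕ → ℕ} (h : ¬(pivotPositions n u).Nonempty) :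
    IsDecr n u := by
  intro i j hi hij hjn hui _
  by_contra! hle
  exact h ⟨j, mem_pivotPositions.2 ⟨⟨by omega, hjn⟩, i, hi, hij, hui, hle⟩⟩

def capValues (n : ℕ) (u : ℕ → ℕ) (k : ℕ) : Finset ℕ :=
  ((Ico 1 k).filter (fun j => 0 < u j ∧ u j ≤ n - k ∧ pivotValue n u ≤ u j ∧ u k < u j)).image u

lemma mem_capValues {n k v : ℕ} {u : ℕ → ℕ} :
    v ∈ capValues n u k ↔ ∃ j, (1 ≤ j ∧ j < k) ∧
      (0 < u j ∧ u j ≤ n - k ∧ pivotValue n u ≤ u j ∧ u k < u j) ∧ u j = v := by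
  simp [capValues, and_assoc]

lemma self_notMem_capValues (n : ℕ) (u : ℕ → ℕ) (k : ℕ) : u k ∉ capValues n u k := by
  intro hk
  obtain ⟨j, -, ⟨-, -, -, hlt⟩, hj⟩ := mem_capValues.1 hk
  omega

lemma card_capValues_le_maxW (n : ℕ) (u : ℕ → ℕ) (k : ℕ) :
    (capValues n u k).card ≤ maxW n u k :=
  card_image_le.trans <| card_le_card fun _ hj => by
    simp only [mem_filter] at hj ⊢
    exact ⟨hj.1, hj.2.1, hj.2.2.1⟩

lemma maxW_eq_zero {n k : ℕ} (u : ℕ → ℕ) (hk : k = 0 ∨ n < k) : maxW n u k = 0 := by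
  rw [maxW, card_eq_zero, filter_eq_empty_iff]
  intro j hj
  rw [mem_Ico] at hj
  omega

lemma isValidW_of_forall_le_maxW {n : ℕ} {u w : ℕ → ℕ} (h : ∀ k, w k ≤ maxW n u k) :
    IsValidW n u w :=
  ⟨fun k _ _ => h k, fun k hk => Nat.eq_zero_of_le_zero (maxW_eq_zero u hk ▸ h k)⟩

section Exchange

def exchange (u : ℕ → ℕ) (i k : ℕ) : ℕ → ℕ :=
  Function.update (Function.update u i (u k)) k (u i - 1)

variable {u : ℕ → ℕ} {i k : ℕ}

@[simp] lemma exchange_apply_right : exchange u i k k = u i - 1 := by simp [exchange]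

lemma exchange_apply_left (hik : i ≠ k) : exchange u i k i = u k := by simp [exchange, hik]

lemma exchange_apply_of_ne {j : ℕ} (hji : j ≠ i) (hjk : j ≠ k) : exchange u i k j = u j := by
  simp [exchange, hji, hjk]

lemma sum_exchange_add_one {S : Finset ℕ} (hi : i ∈ S) (hk : k ∈ S)
    (hik : i ≠ k) (hpos : 0 < u i) :
    ∑ j ∈ S, exchange u i k j + 1 = ∑ j ∈ S, u j := by
  have hi' : i ∈ S.erase k := mem_erase.2 ⟨hik, hi⟩
  rw [exchange, sum_update_of_mem hk, sdiff_singleton_eq_erase, sum_update_of_mem hi',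
    sdiff_singleton_eq_erase, ← add_sum_erase S u hk, ← add_sum_erase _ u hi']
  omega

end Exchange

/-- What the invariant needs to know about the positions `i < k` exchanged by `phi1Step`. -/
structure IsExchange (n : ℕ) (u : ℕ → ℕ) (i k : ℕ) : Prop where
  one_le : 1 ≤ i
  lt : i < k
  le_n : k ≤ n
  eq_pivotValue : u k = pivotValue n u
  pos : 0 < u i
  le : u i ≤ u k
  le_of_left : ∀ j, 1 ≤ j → j < k → 0 < u j → u j ≤ u k → u j ≤ u i

lemma phi1Step_eq_none_iff {n : ℕ} {s : (ℕ → ℕ) × (ℕ → ℕ)} :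
    phi1Step n s = none ↔ ¬(pivotPositions n s.1).Nonempty := by
  unfold phi1Step
  split_ifs with h <;> simp [h]

lemma exists_isExchange_phi1Step_eq {n : ℕ} {u : ℕ → ℕ} (hne : (pivotPositions n u).Nonempty)
    (w : ℕ → ℕ) :
    ∃ i k, IsExchange n u i k ∧
      phi1Step n (u, w) = some (exchange u i k, Function.update w k (w k + 1)) := by
  obtain ⟨⟨k₀, hk₀, hk₀p⟩, -⟩ := sup_image_spec u hne
  obtain ⟨⟨hk₀1, hk₀n⟩, j₀, hj₀1, hj₀k₀, hj₀pos, hj₀le⟩ := mem_pivotPositions.1 hk₀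
  set p := ((pivotPositions n u).image u).sup id
  obtain ⟨hk, hkp, hkmax⟩ :=
    sup_id_filter_spec (P := (u · = p)) (mem_Icc.2 ⟨hk₀1, hk₀n⟩) hk₀p
  set k := ((Icc 1 n).filter (u · = p)).sup id
  have hj₀k : j₀ < k := hj₀k₀.trans_le (hkmax k₀ (mem_Icc.2 ⟨hk₀1, hk₀n⟩) hk₀p)
  have hj₀ : j₀ ∈ (Ico 1 k).filter (fun j => 0 < u j ∧ u j ≤ p) :=
    mem_filter.2 ⟨mem_Ico.2 ⟨hj₀1, hj₀k⟩, hj₀pos, hk₀p ▸ hj₀le⟩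
  obtain ⟨⟨j₁, hj₁, hj₁m⟩, hmmax⟩ := sup_image_spec u ⟨j₀, hj₀⟩
  set m := (((Ico 1 k).filter (fun j => 0 < u j ∧ u j ≤ p)).image u).sup id
  obtain ⟨hj₁k, hj₁pos, hj₁p⟩ := mem_filter.1 hj₁
  obtain ⟨hi, him, -⟩ := sup_id_filter_spec (P := (u · = m)) hj₁k hj₁m
  obtain ⟨hi1, hik⟩ := mem_Ico.1 hi
  obtain ⟨hk1, hkn⟩ := mem_Icc.1 hk
  refine ⟨_, k, ⟨hi1, hik, hkn, hkp, by omega, by omega,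
    fun j h1 h2 h3 h4 => him.symm ▸ hmmax j (mem_filter.2 ⟨mem_Ico.2 ⟨h1, h2⟩, h3, hkp ▸ h4⟩)⟩, ?_⟩
  rw [phi1Step, if_pos hne]
  rfl

namespace IsExchange

variable {n : ℕ} {u : ℕ → ℕ} {i k : ℕ}

lemma isSubexc_exchange (h : IsExchange n u i k) (hu : IsSubexc n u) :
    IsSubexc n (exchange u i k) := by
  have hk := hu.1 k (h.one_le.trans h.lt.le) h.le_n
  have := h.one_le
  have := h.lt
  have := h.le
  have := h.le_n
  refine ⟨fun j h1 h2 => ?_, fun j hj => ?_⟩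
  · by_cases hjk : j = k
    · subst hjk; simp only [exchange_apply_right]; omega
    by_cases hji : j = i
    · subst hji; rw [exchange_apply_left hjk]; omega
    · rw [exchange_apply_of_ne hji hjk]; exact hu.1 j h1 h2
  · rw [exchange_apply_of_ne (by omega) (by omega)]
    exact hu.2 j hj

lemma pos_le_max_of_exchange_pos (h : IsExchange n u i k) {j : ℕ}
    (hj : 0 < exchange u i k j) : 0 < u j ∧ u j ≤ max (exchange u i k j) (u k) := by
  have := h.pos
  have := h.le
  by_cases hjk : j = k
  · subst hjk; simp only [exchange_apply_right] at hj ⊢; omega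
  by_cases hji : j = i
  · subst hji; rw [exchange_apply_left hjk] at hj ⊢; omega
  · rw [exchange_apply_of_ne hji hjk] at hj ⊢; omega

lemma pivotValue_exchange_le (h : IsExchange n u i k) :
    pivotValue n (exchange u i k) ≤ u k := by
  refine Finset.sup_le fun _ hv => ?_
  obtain ⟨x, hx, rfl⟩ := mem_image.1 hv
  obtain ⟨hxn, j, hj1, hjx, hjpos, hjle⟩ := mem_pivotPositions.1 hx
  by_contra! hlt
  rw [id] at hlt
  have hxi : x ≠ i := by rintro rfl; rw [exchange_apply_left h.lt.ne] at hlt; omega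
  have hxk : x ≠ k := by rintro rfl; have := h.le; simp only [exchange_apply_right] at hlt; omega
  rw [exchange_apply_of_ne hxi hxk] at hlt
  rw [exchange_apply_of_ne hxi hxk] at hjle
  obtain ⟨hjpos', hjle'⟩ := h.pos_le_max_of_exchange_pos hjpos
  have hxP : x ∈ pivotPositions n u :=
    mem_pivotPositions.2 ⟨hxn, j, hj1, hjx, hjpos', by omega⟩
  have := le_pivotValue hxP
  rw [← h.eq_pivotValue] at this
  omega

lemma mem_capValues_exchange (h : IsExchange n u i k) {kk j v : ℕ} (hj : 1 ≤ j ∧ j < kk)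
    (hjv : exchange u i k j = v) (hv : 0 < v ∧ v ≤ n - kk) (hkv : u k ≤ v)
    (hkk : exchange u i k kk < v) : v ∈ capValues n (exchange u i k) kk :=
  mem_capValues.2 ⟨j, hj, ⟨by omega, by omega,
    hjv ▸ h.pivotValue_exchange_le.trans (hjv ▸ hkv), by omega⟩, hjv⟩

lemma capValues_subset (h : IsExchange n u i k) {kk : ℕ} (hkk : kk ≠ k) :
    capValues n u kk ⊆ capValues n (exchange u i k) kk := by
  intro v hv
  obtain ⟨j, hj, ⟨hjpos, hjle, hjp, hjgt⟩, rfl⟩ := mem_capValues.1 hv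
  rw [← h.eq_pivotValue] at hjp
  have := h.lt
  have := h.le
  rcases hjp.lt_or_eq with hkj | hkj
  · have hji : j ≠ i := by rintro rfl; omega
    have hjk : j ≠ k := by rintro rfl; omega
    refine h.mem_capValues_exchange hj (exchange_apply_of_ne hji hjk) ⟨hjpos, hjle⟩ hjp ?_
    by_cases hkki : kk = i
    · rwa [hkki, exchange_apply_left h.lt.ne]
    · rwa [exchange_apply_of_ne hkki hkk]
  · by_cases hikk : i < kk
    · refine h.mem_capValues_exchange ⟨h.one_le, hikk⟩
        ((exchange_apply_left h.lt.ne).trans hkj) ⟨hjpos, hjle⟩ hjp ?_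
      rw [exchange_apply_of_ne (by omega) hkk]
      omega
    · -- here `j < kk ≤ i < k`, so `u j = u k` forces `u i = u k`
      have := h.le_of_left j hj.1 (by omega) hjpos hkj.ge
      have hkki : kk ≠ i := by rintro rfl; omega
      refine h.mem_capValues_exchange hj (exchange_apply_of_ne (by omega) (by omega))
        ⟨hjpos, hjle⟩ hjp ?_
      rwa [exchange_apply_of_ne hkki hkk]

lemma insert_capValues_subset (h : IsExchange n u i k) (hu : IsSubexc n u) :
    insert (u k) (capValues n u k) ⊆ capValues n (exchange u i k) k := by
  have := h.lt
  have := h.le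
  have := h.pos
  intro v hv
  rcases mem_insert.1 hv with rfl | hv
  · exact h.mem_capValues_exchange ⟨h.one_le, h.lt⟩ (exchange_apply_left h.lt.ne)
      ⟨by omega, hu.1 k (by omega) h.le_n⟩ le_rfl (by simp only [exchange_apply_right]; omega)
  · obtain ⟨j, hj, ⟨hjpos, hjle, -, hjgt⟩, rfl⟩ := mem_capValues.1 hv
    have hji : j ≠ i := by rintro rfl; omega
    exact h.mem_capValues_exchange hj (exchange_apply_of_ne hji hj.2.ne) ⟨hjpos, hjle⟩ hjgt.le
      (by simp only [exchange_apply_right]; omega)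

end IsExchange

/-- The invariant of the sorting algorithm, on states `(u, w)`. -/
def IsAdmissible (n : ℕ) (s : (ℕ → ℕ) × (ℕ → ℕ)) : Prop :=
  IsSubexc n s.1 ∧ ∀ k, s.2 k ≤ (capValues n s.1 k).card

lemma IsAdmissible.step {n : ℕ} {s s' : (ℕ → ℕ) × (ℕ → ℕ)} (hs : IsAdmissible n s)
    (hstep : phi1Step n s = some s') :
    IsAdmissible n s' ∧ ∑ j ∈ Icc 1 n, s'.1 j < ∑ j ∈ Icc 1 n, s.1 j := by
  obtain ⟨u, w⟩ := s
  obtain ⟨hu, hw⟩ : IsSubexc n u ∧ ∀ k, w k ≤ (capValues n u k).card := hs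
  have hne : (pivotPositions n u).Nonempty := by
    by_contra hne
    rw [phi1Step_eq_none_iff.2 hne] at hstep
    cases hstep
  obtain ⟨i, k, h, heq⟩ := exists_isExchange_phi1Step_eq hne w
  rw [heq, Option.some_inj] at hstep
  subst hstep
  refine ⟨⟨h.isSubexc_exchange hu, fun kk => ?_⟩, ?_⟩
  · dsimp only
    by_cases hkk : kk = k
    · subst hkk
      calc Function.update w kk (w kk + 1) kk
          = w kk + 1 := Function.update_self ..
        _ ≤ (capValues n u kk).card + 1 := Nat.add_le_add_right (hw kk) 1
        _ = (insert (u kk) (capValues n u kk)).card :=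
          (card_insert_of_notMem (self_notMem_capValues n u kk)).symm
        _ ≤ (capValues n (exchange u i kk) kk).card := card_le_card (h.insert_capValues_subset hu)
    · rw [Function.update_of_ne hkk]
      exact (hw kk).trans (card_le_card (h.capValues_subset hkk))
  · have hi : i ∈ Icc 1 n := mem_Icc.2 ⟨h.one_le, (h.lt.trans_le h.le_n).le⟩
    have hk : k ∈ Icc 1 n := mem_Icc.2 ⟨h.one_le.trans h.lt.le, h.le_n⟩
    have := sum_exchange_add_one hi hk h.lt.ne h.pos
    dsimp only
    omega

lemma phi1Iter_preserves_and_terminates {n : ℕ} (P : (ℕ → ℕ) × (ℕ → ℕ) → Prop)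
    (μ : (ℕ → ℕ) × (ℕ → ℕ) → ℕ)
    (hstep : ∀ s s', P s → phi1Step n s = some s' → P s' ∧ μ s' < μ s) :
    ∀ N s, P s → μ s < N → P (phi1Iter n N s) ∧ phi1Step n (phi1Iter n N s) = none
  | 0, _, _, hN => (Nat.not_lt_zero _ hN).elim
  | N + 1, s, hs, hN => by
    rw [phi1Iter]
    cases h : phi1Step n s with
    | none => exact ⟨hs, h⟩
    | some s' =>
      obtain ⟨hs', hμ⟩ := hstep s s' hs h
      exact phi1Iter_preserves_and_terminates P μ hstep N s' hs' (by omega)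

end Phi1

/-- The sorting algorithm φ₁ terminates on every subexcedent function `u` of size `n`
(iterating its elementary step eventually reaches a state with no pivot), and its output
`φ₁(u) = (v, w)` is a decreasing subexcedent function `v` together with a valid
weight `w` for `v`. -/
theorem phi1_terminates_welldefined (n : ℕ) (u : ℕ → ℕ) (hu : IsSubexc n u) :
    (∃ m, phi1Step n (phi1Iter n m (u, fun _ => 0)) = none) ∧
    IsSubexc n (phi1 n u).1 ∧ IsDecr n (phi1 n u).1 ∧
    IsValidW n (phi1 n u).1 (phi1 n u).2 := by
  obtain ⟨⟨hsub, hw⟩, hstop⟩ :=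
    Phi1.phi1Iter_preserves_and_terminates (Phi1.IsAdmissible n)
      (fun s => ∑ j ∈ Finset.Icc 1 n, s.1 j) (fun _ _ hs h => hs.step h)
      ((∑ j ∈ Finset.Icc 1 n, u j) + 1) (u, fun _ => 0) ⟨hu, fun _ => Nat.zero_le _⟩
      (Nat.lt_succ_self _)
  exact ⟨⟨_, hstop⟩, hsub, Phi1.isDecr_of_not_nonempty (Phi1.phi1Step_eq_none_iff.1 hstop),
    Phi1.isValidW_of_forall_le_maxW fun k => (hw k).trans (Phi1.card_capValues_le_maxW n _ k)⟩
end
end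

section
/- In the sorting algorithm φ1, consider the weighted subexcedent function (u,w) obtained just after an exchange of Step 2 moving the pivot from position k to position i. Then both positions can be recovered from (u,w): i is the rightmost position such that there exists a position r > i with w_r > 0 and u_i > u_r, and k is the smallest position strictly greater than i with w_k > 0. -/
open scoped Classical
noncomputable section

namespace Phi1Aux

/-- the pivot value -/
def pv (n : ℕ) (u : ℕ → ℕ) : ℕ := ((pivotPositions n u).image u).sup id
/-- the pivot position -/
def kk (n : ℕ) (u : ℕ → ℕ) : ℕ := ((Finset.Icc 1 n).filter (fun x => u x = pv n u)).sup id
/-- candidates below `c` with threshold `P` -/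
def cnd (u : ℕ → ℕ) (P c : ℕ) : Finset ℕ := (Finset.Ico 1 c).filter (fun j => 0 < u j ∧ u j ≤ P)
/-- the maximal candidate value -/
def mv (u : ℕ → ℕ) (P c : ℕ) : ℕ := ((cnd u P c).image u).sup id
/-- rightmost occurrence of the maximal candidate value -/
def nxt (u : ℕ → ℕ) (P c : ℕ) : ℕ := ((Finset.Ico 1 c).filter (fun j => u j = mv u P c)).sup id

lemma sup_id_mem {S : Finset ℕ} (h : S.Nonempty) : S.sup id ∈ S := by
  obtain ⟨b, hb, he⟩ := Finset.exists_mem_eq_sup S h id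
  rw [he]; exact hb

lemma mem_pivotPositions {n : ℕ} {u : ℕ → ℕ} {x : ℕ} :
    x ∈ pivotPositions n u ↔ (1 ≤ x ∧ x ≤ n) ∧ ∃ j, 1 ≤ j ∧ j < x ∧ 0 < u j ∧ u j ≤ u x := by
  simp [pivotPositions, Finset.mem_filter, Finset.mem_Icc]

lemma le_pv {n : ℕ} {u : ℕ → ℕ} {x : ℕ} (hx : x ∈ pivotPositions n u) : u x ≤ pv n u :=
  Finset.le_sup (f := id) (Finset.mem_image_of_mem u hx)

section PivotFacts
variable {n : ℕ} {u : ℕ → ℕ}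

lemma pv_attained (hne : (pivotPositions n u).Nonempty) :
    ∃ x ∈ pivotPositions n u, u x = pv n u := by
  obtain ⟨b, hb, he⟩ :=
    Finset.exists_mem_eq_sup ((pivotPositions n u).image u) (hne.image u) id
  obtain ⟨x, hx, hxb⟩ := Finset.mem_image.mp hb
  exact ⟨x, hx, by rw [hxb]; exact he.symm⟩

lemma kk_mem (hne : (pivotPositions n u).Nonempty) :
    kk n u ∈ Finset.Icc 1 n ∧ u (kk n u) = pv n u := by
  obtain ⟨x, hx, hux⟩ := pv_attained hne
  have hxIcc : x ∈ Finset.Icc 1 n := (Finset.mem_filter.mp hx).1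
  have hS : ((Finset.Icc 1 n).filter (fun y => u y = pv n u)).Nonempty :=
    ⟨x, Finset.mem_filter.mpr ⟨hxIcc, hux⟩⟩
  have := Finset.mem_filter.mp (sup_id_mem hS)
  exact ⟨this.1, this.2⟩

lemma le_kk (hne : (pivotPositions n u).Nonempty) {x : ℕ}
    (hx : x ∈ Finset.Icc 1 n) (hux : u x = pv n u) : x ≤ kk n u :=
  Finset.le_sup (f := id) (Finset.mem_filter.mpr ⟨hx, hux⟩)

lemma kk_pivot (hne : (pivotPositions n u).Nonempty) : kk n u ∈ pivotPositions n u := by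
  obtain ⟨x, hx, hux⟩ := pv_attained hne
  obtain ⟨hxIcc, j, h1j, hjx, hj0, hjle⟩ := mem_pivotPositions.mp hx
  have hxk : x ≤ kk n u := le_kk hne (Finset.mem_Icc.mpr hxIcc) hux
  refine mem_pivotPositions.mpr ⟨Finset.mem_Icc.mp (kk_mem hne).1, j, h1j,
    lt_of_lt_of_le hjx hxk, hj0, ?_⟩
  rw [(kk_mem hne).2, ← hux]
  exact hjle.trans (hux ▸ le_pv hx)

lemma cnd_kk_nonempty (hne : (pivotPositions n u).Nonempty) :
    (cnd u (pv n u) (kk n u)).Nonempty := by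
  obtain ⟨_, j, h1j, hjk, hj0, hjle⟩ := mem_pivotPositions.mp (kk_pivot hne)
  exact ⟨j, Finset.mem_filter.mpr ⟨Finset.mem_Ico.mpr ⟨h1j, hjk⟩, hj0,
    hjle.trans (le_of_eq (kk_mem hne).2)⟩⟩

end PivotFacts

section CndFacts
variable {u : ℕ → ℕ} {P c : ℕ}

lemma le_mv {j : ℕ} (h1 : 1 ≤ j) (h2 : j < c) (h3 : 0 < u j) (h4 : u j ≤ P) :
    u j ≤ mv u P c :=
  Finset.le_sup (f := id) (Finset.mem_image_of_mem u
    (Finset.mem_filter.mpr ⟨Finset.mem_Ico.mpr ⟨h1, h2⟩, h3, h4⟩))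

lemma mv_attained (hA : (cnd u P c).Nonempty) :
    ∃ j, (1 ≤ j ∧ j < c) ∧ (0 < u j ∧ u j ≤ P) ∧ u j = mv u P c := by
  obtain ⟨b, hb, he⟩ := Finset.exists_mem_eq_sup ((cnd u P c).image u) (hA.image u) id
  obtain ⟨x, hx, hxb⟩ := Finset.mem_image.mp hb
  obtain ⟨hxI, hx0, hxP⟩ := Finset.mem_filter.mp hx
  exact ⟨x, Finset.mem_Ico.mp hxI, ⟨hx0, hxP⟩, by rw [hxb]; exact he.symm⟩

lemma mv_pos (hA : (cnd u P c).Nonempty) : 0 < mv u P c := by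
  obtain ⟨j, _, ⟨hj0, _⟩, hjm⟩ := mv_attained hA
  exact hjm ▸ hj0

lemma mv_le (hA : (cnd u P c).Nonempty) : mv u P c ≤ P := by
  obtain ⟨j, _, ⟨_, hjP⟩, hjm⟩ := mv_attained hA
  exact hjm ▸ hjP

lemma le_nxt {j : ℕ} (h1 : 1 ≤ j) (h2 : j < c) (h3 : u j = mv u P c) : j ≤ nxt u P c :=
  Finset.le_sup (f := id) (Finset.mem_filter.mpr ⟨Finset.mem_Ico.mpr ⟨h1, h2⟩, h3⟩)

lemma nxt_mem (hA : (cnd u P c).Nonempty) :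
    (1 ≤ nxt u P c ∧ nxt u P c < c) ∧ u (nxt u P c) = mv u P c := by
  obtain ⟨j, ⟨h1, h2⟩, _, hjm⟩ := mv_attained hA
  have hS : ((Finset.Ico 1 c).filter (fun j => u j = mv u P c)).Nonempty :=
    ⟨j, Finset.mem_filter.mpr ⟨Finset.mem_Ico.mpr ⟨h1, h2⟩, hjm⟩⟩
  have := Finset.mem_filter.mp (sup_id_mem hS)
  exact ⟨Finset.mem_Ico.mp this.1, this.2⟩

end CndFacts

section D2
variable {n : ℕ} {u : ℕ → ℕ}

/-- values strictly between `i` and `k` are `< m`. -/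
lemma val_between (hne : (pivotPositions n u).Nonempty) {j : ℕ}
    (h1 : nxt u (pv n u) (kk n u) < j) (h2 : j < kk n u) :
    u j < mv u (pv n u) (kk n u) := by
  set p := pv n u
  set k := kk n u
  set m := mv u p k
  set i := nxt u p k
  have hA := cnd_kk_nonempty hne
  have hi := nxt_mem hA
  have h1j : 1 ≤ j := hi.1.1.trans (le_of_lt h1)
  by_contra hcon
  push_neg at hcon   -- m ≤ u j
  have hj0 : 0 < u j := lt_of_lt_of_le (mv_pos hA) hcon
  rcases le_or_gt (u j) p with hle | hgt
  · have := le_mv h1j h2 hj0 hle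
    have hje : u j = m := le_antisymm this hcon
    exact absurd (le_nxt h1j h2 hje) (not_le.mpr h1)
  · have hjpiv : j ∈ pivotPositions n u := by
      refine mem_pivotPositions.mpr ⟨⟨h1j,
        le_of_lt (lt_of_lt_of_le h2 (Finset.mem_Icc.mp (kk_mem hne).1).2)⟩,
        i, hi.1.1, h1, ?_, ?_⟩
      · rw [hi.2]; exact mv_pos hA
      · rw [hi.2]; exact le_of_lt (lt_of_le_of_lt (mv_le hA) hgt)
    exact absurd (le_pv hjpiv) (not_le.mpr hgt)
end D2

/-- The invariant maintained along the run. -/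
def Inv (n : ℕ) (u w : ℕ → ℕ) : Prop :=
  (∀ c, c ≤ kk n u → (cnd u (pv n u) c).Nonempty →
    ∀ r, 0 < w r → nxt u (pv n u) c < r → r < c → False) ∧
  (∀ a r, nxt u (pv n u) (kk n u) < a → a ≤ n → a ≠ kk n u → a < r → r ≤ n → r ≠ kk n u →
    0 < w r → u a ≤ u r) ∧
  (∀ r, kk n u < r → r ≤ n → 0 < w r → mv u (pv n u) (kk n u) - 1 ≤ u r)


section Step
variable {n : ℕ} {u u' : ℕ → ℕ}

/-- basic facts about the pivot data of a state -/
lemma basics (hne : (pivotPositions n u).Nonempty) :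
    (1 ≤ nxt u (pv n u) (kk n u) ∧ nxt u (pv n u) (kk n u) < kk n u ∧ kk n u ≤ n) ∧
    (u (nxt u (pv n u) (kk n u)) = mv u (pv n u) (kk n u) ∧ u (kk n u) = pv n u) ∧
    (0 < mv u (pv n u) (kk n u) ∧ mv u (pv n u) (kk n u) ≤ pv n u) := by
  have hA := cnd_kk_nonempty hne
  have h := nxt_mem hA
  exact ⟨⟨h.1.1, h.1.2, (Finset.mem_Icc.mp (kk_mem hne).1).2⟩, ⟨h.2, (kk_mem hne).2⟩,
    mv_pos hA, mv_le hA⟩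

variable (hu' : u' = Function.update
    (Function.update u (nxt u (pv n u) (kk n u)) (u (kk n u))) (kk n u)
    (u (nxt u (pv n u) (kk n u)) - 1))

include hu'

lemma u'_at_i (hne : (pivotPositions n u).Nonempty) :
    u' (nxt u (pv n u) (kk n u)) = pv n u := by
  have hik := (basics hne).1.2.1
  rw [hu', Function.update_of_ne (ne_of_lt hik), Function.update_self, (basics hne).2.1.2]

lemma u'_at_k (hne : (pivotPositions n u).Nonempty) :
    u' (kk n u) = mv u (pv n u) (kk n u) - 1 := by
  rw [hu', Function.update_self, (basics hne).2.1.1]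

lemma u'_at {j : ℕ} (hji : j ≠ nxt u (pv n u) (kk n u)) (hjk : j ≠ kk n u) :
    u' j = u j := by
  rw [hu', Function.update_of_ne hjk, Function.update_of_ne hji]

/-- the pivot value never increases -/
lemma pv_step_le (hne : (pivotPositions n u).Nonempty)
    (hne' : (pivotPositions n u').Nonempty) : pv n u' ≤ pv n u := by
  obtain ⟨⟨hi1, hik, hkn⟩, ⟨huim, hukp⟩, hm0, hmp⟩ := basics hne
  have hu'i := u'_at_i hu' hne
  have hu'k := u'_at_k hu' hne
  set p := pv n u with hp
  set k := kk n u with hk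
  set m := mv u p k with hm
  set i := nxt u p k with hi
  obtain ⟨x, hx, hux⟩ := pv_attained hne'
  rw [← hux]
  obtain ⟨⟨hx1, hxn⟩, j, hj1, hjx, hj0, hjle⟩ := mem_pivotPositions.mp hx
  by_cases hxi : x = i
  · rw [hxi, hu'i]
  by_cases hxk : x = k
  · rw [hxk, hu'k]; omega
  rw [u'_at hu' hxi hxk]
  by_cases hji : j = i
  · subst hji
    rw [hu'i, u'_at hu' hxi hxk] at hjle
    refine le_pv (mem_pivotPositions.mpr ⟨⟨hx1, hxn⟩, i, hi1, hjx, ?_, ?_⟩)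
    · rw [huim]; omega
    · rw [huim]; omega
  by_cases hjk : j = k
  · subst hjk
    rw [hu'k] at hjle hj0
    rw [u'_at hu' hxi hxk] at hjle
    rcases le_or_gt m (u x) with hmx | hxm
    · refine le_pv (mem_pivotPositions.mpr ⟨⟨hx1, hxn⟩, i, hi1, ?_, ?_, ?_⟩)
      · omega
      · rw [huim]; omega
      · rw [huim]; omega
    · omega
  · rw [u'_at hu' hxi hxk] at hjle
    rw [u'_at hu' hji hjk] at hjle hj0
    exact le_pv (mem_pivotPositions.mpr ⟨⟨hx1, hxn⟩, j, hj1, hjx, hj0, hjle⟩)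

/-- if the pivot value is unchanged, the new pivot position is `i` -/
lemma kk_continuation (hne : (pivotPositions n u).Nonempty)
    (hne' : (pivotPositions n u').Nonempty) (hpp : pv n u' = pv n u) :
    kk n u' = nxt u (pv n u) (kk n u) := by
  obtain ⟨⟨hi1, hik, hkn⟩, ⟨huim, hukp⟩, hm0, hmp⟩ := basics hne
  have hu'i := u'_at_i hu' hne
  have hu'k := u'_at_k hu' hne
  set p := pv n u with hp
  set k := kk n u with hk
  set m := mv u p k with hm
  set i := nxt u p k with hi
  have hiIcc : i ∈ Finset.Icc 1 n := Finset.mem_Icc.mpr ⟨hi1, by omega⟩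
  have h1 : i ≤ kk n u' := le_kk hne' hiIcc (by rw [hu'i, hpp])
  refine le_antisymm ?_ h1
  by_contra hcon
  push_neg at hcon
  set k' := kk n u' with hk'
  have hk'p : u' k' = p := by rw [(kk_mem hne').2, hpp]
  by_cases hkk : k' = k
  · rw [hkk, hu'k] at hk'p
    omega
  · have hk'i : k' ≠ i := ne_of_gt hcon
    rw [u'_at hu' hk'i hkk] at hk'p
    have hk'k : k' ≤ k := le_kk hne (kk_mem hne').1 hk'p
    have hvb : u k' < m := val_between hne hcon (lt_of_le_of_ne hk'k hkk)
    omega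

/-- if the pivot value decreases, there is no candidate below `i` -/
lemma restart_cond (hne : (pivotPositions n u).Nonempty)
    (hne' : (pivotPositions n u').Nonempty) (hpp : pv n u' < pv n u) :
    ∀ j, 1 ≤ j → j < nxt u (pv n u) (kk n u) → ¬(0 < u j ∧ u j ≤ pv n u) := by
  set p := pv n u with hp
  set k := kk n u with hk
  set i := nxt u p k with hi
  obtain ⟨⟨hi1, hik, hkn⟩, ⟨huim, hukp⟩, hm0, hmp⟩ := basics hne
  rintro j hj1 hji ⟨hj0, hjp⟩
  have hipiv : i ∈ pivotPositions n u' := by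
    refine mem_pivotPositions.mpr ⟨⟨hi1, le_of_lt (lt_of_lt_of_le hik hkn)⟩, j, hj1, hji, ?_, ?_⟩
    · rwa [u'_at hu' (ne_of_lt hji) (ne_of_lt (lt_trans hji hik))]
    · rw [u'_at hu' (ne_of_lt hji) (ne_of_lt (lt_trans hji hik)), u'_at_i hu' hne]
      exact hjp
  have := le_pv hipiv
  rw [u'_at_i hu' hne] at this
  omega

/-- in the restart case, every `u'`-candidate (threshold `pv n u'`) lies above `i` -/
lemma restart_cand_above (hne : (pivotPositions n u).Nonempty)
    (hne' : (pivotPositions n u').Nonempty) (hpp : pv n u' < pv n u) :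
    ∀ j, 1 ≤ j → 0 < u' j → u' j ≤ pv n u' → nxt u (pv n u) (kk n u) < j := by
  set p := pv n u with hp
  set k := kk n u with hk
  set i := nxt u p k with hi
  obtain ⟨⟨hi1, hik, hkn⟩, ⟨huim, hukp⟩, hm0, hmp⟩ := basics hne
  intro j hj1 hj0 hjp
  by_contra hcon
  push_neg at hcon
  rcases eq_or_lt_of_le hcon with hji | hji
  · rw [hji, u'_at_i hu' hne] at hjp
    omega
  · rw [u'_at hu' (ne_of_lt hji) (ne_of_lt (lt_trans hji hik))] at hj0 hjp
    exact restart_cond hu' hne hne' hpp j hj1 hji ⟨hj0, le_of_lt (lt_of_le_of_lt hjp hpp)⟩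

/-- in the restart case, `i < i'` -/
lemma restart_i_lt (hne : (pivotPositions n u).Nonempty)
    (hne' : (pivotPositions n u').Nonempty) (hpp : pv n u' < pv n u) :
    nxt u (pv n u) (kk n u) < nxt u' (pv n u') (kk n u') := by
  have hA' := cnd_kk_nonempty hne'
  have h := nxt_mem hA'
  exact restart_cand_above hu' hne hne' hpp _ h.1.1
    (by rw [h.2]; exact mv_pos hA') (by rw [h.2]; exact mv_le hA')

end Step

section Claims
variable {n : ℕ} {u w u' w' : ℕ → ℕ}

lemma step_claims (hne : (pivotPositions n u).Nonempty) (hI : Inv n u w)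
    (hu' : u' = Function.update (Function.update u (nxt u (pv n u) (kk n u)) (u (kk n u)))
      (kk n u) (u (nxt u (pv n u) (kk n u)) - 1))
    (hw' : w' = Function.update w (kk n u) (w (kk n u) + 1)) :
    ((Finset.Icc 1 n).filter (fun a => ∃ r, a < r ∧ r ≤ n ∧ 0 < w' r ∧ u' r < u' a)).max
        = (nxt u (pv n u) (kk n u) : WithBot ℕ) ∧
    ((Finset.Icc 1 n).filter (fun r => nxt u (pv n u) (kk n u) < r ∧ 0 < w' r)).min
        = (kk n u : WithTop ℕ) := by
  obtain ⟨⟨hi1, hik, hkn⟩, ⟨huim, hukp⟩, hm0, hmp⟩ := basics hne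
  have hu'i := u'_at_i hu' hne
  have hu'k := u'_at_k hu' hne
  obtain ⟨hC, hB, hD⟩ := hI
  have hA := cnd_kk_nonempty hne
  set p := pv n u with hp
  set k := kk n u with hk
  set m := mv u p k with hm
  set i := nxt u p k with hi
  have hw'k : w' k = w k + 1 := by rw [hw', Function.update_self]
  have hw'at : ∀ r, r ≠ k → w' r = w r := by
    intro r hr; rw [hw', Function.update_of_ne hr]
  constructor
  · -- max claim
    have hiS : i ∈ (Finset.Icc 1 n).filter
        (fun a => ∃ r, a < r ∧ r ≤ n ∧ 0 < w' r ∧ u' r < u' a) := by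
      refine Finset.mem_filter.mpr ⟨Finset.mem_Icc.mpr ⟨hi1, by omega⟩,
        k, hik, hkn, by rw [hw'k]; omega, by rw [hu'k, hu'i]; omega⟩
    have hub : ∀ a ∈ (Finset.Icc 1 n).filter
        (fun a => ∃ r, a < r ∧ r ≤ n ∧ 0 < w' r ∧ u' r < u' a), a ≤ i := by
      rintro a ha
      obtain ⟨haIcc, r, har, hrn, hwr, hur⟩ := Finset.mem_filter.mp ha
      obtain ⟨ha1, han⟩ := Finset.mem_Icc.mp haIcc
      by_contra hia
      push_neg at hia   -- i < a
      by_cases hak : a = k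
      · have hrk : r ≠ k := by omega
        have hri : r ≠ i := by omega
        rw [hw'at r hrk] at hwr
        have hDr : m - 1 ≤ u r := hD r (by omega) hrn hwr
        rw [u'_at hu' hri hrk, hak, hu'k] at hur
        omega
      · have hai : a ≠ i := by omega
        by_cases haltk : a < k
        · have hva : u a < m := val_between hne hia haltk
          rw [u'_at hu' hai hak] at hur
          by_cases hrk : r = k
          · rw [hrk, hu'k] at hur; omega
          · rw [hw'at r hrk] at hwr
            have hri : r ≠ i := by omega
            rcases lt_or_gt_of_ne hrk with hrltk | hrgtk
            · exact hC k le_rfl hA r hwr (by omega) hrltk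
            · have hDr : m - 1 ≤ u r := hD r hrgtk hrn hwr
              rw [u'_at hu' hri hrk] at hur
              omega
        · -- a > k
          have hka : k < a := by omega
          have hrk : r ≠ k := by omega
          have hri : r ≠ i := by omega
          rw [hw'at r hrk] at hwr
          have := hB a r (by omega) han hak har hrn hrk hwr
          rw [u'_at hu' hai hak, u'_at hu' hri hrk] at hur
          omega
    exact le_antisymm (Finset.max_le fun b hb => WithBot.coe_le_coe.mpr (hub b hb))
      (Finset.le_max hiS)
  · -- min claim
    have hkT : k ∈ (Finset.Icc 1 n).filter (fun r => i < r ∧ 0 < w' r) :=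
      Finset.mem_filter.mpr ⟨Finset.mem_Icc.mpr ⟨by omega, hkn⟩, hik, by rw [hw'k]; omega⟩
    have hlb : ∀ r ∈ (Finset.Icc 1 n).filter (fun r => i < r ∧ 0 < w' r), k ≤ r := by
      rintro r hr
      obtain ⟨hrIcc, hir, hwr⟩ := Finset.mem_filter.mp hr
      by_contra hrk
      push_neg at hrk
      have hrk' : r ≠ k := by omega
      rw [hw'at r hrk'] at hwr
      exact hC k le_rfl hA r hwr hir hrk
    exact le_antisymm (Finset.min_le hkT) (Finset.le_min fun b hb => WithTop.coe_le_coe.mpr (hlb b hb))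

end Claims

section StepInv
variable {n : ℕ} {u w u' w' : ℕ → ℕ}

lemma step_inv (hne : (pivotPositions n u).Nonempty) (hI : Inv n u w)
    (hne' : (pivotPositions n u').Nonempty)
    (hu' : u' = Function.update (Function.update u (nxt u (pv n u) (kk n u)) (u (kk n u)))
      (kk n u) (u (nxt u (pv n u) (kk n u)) - 1))
    (hw' : w' = Function.update w (kk n u) (w (kk n u) + 1)) :
    Inv n u' w' := by
  obtain ⟨⟨hi1, hik, hkn⟩, ⟨huim, hukp⟩, hm0, hmp⟩ := basics hne
  obtain ⟨⟨hi'1, hi'k', hk'n⟩, ⟨hu'i'm', hu'k'p'⟩, hm'0, hm'p'⟩ := basics hne'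
  have hu'i := u'_at_i hu' hne
  have hu'k := u'_at_k hu' hne
  obtain ⟨hC, hB, hD⟩ := hI
  have hA := cnd_kk_nonempty hne
  have hA' := cnd_kk_nonempty hne'
  have hple := pv_step_le hu' hne hne'
  set p := pv n u with hpdef
  set k := kk n u with hkdef
  set m := mv u p k with hmdef
  set i := nxt u p k with hidef
  set p' := pv n u' with hp'def
  set k' := kk n u' with hk'def
  set m' := mv u' p' k' with hm'def
  set i' := nxt u' p' k' with hi'def
  have hu'at : ∀ j, j ≠ i → j ≠ k → u' j = u j := fun j h1 h2 => u'_at hu' h1 h2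
  have hval : ∀ j, i < j → j < k → u j < m := fun j h1 h2 => val_between hne h1 h2
  have hval' : ∀ j, i' < j → j < k' → u' j < m' := fun j h1 h2 => val_between hne' h1 h2
  have hw'k : w' k = w k + 1 := by rw [hw', Function.update_self]
  have hw'at : ∀ r, r ≠ k → w' r = w r := fun r hr => by rw [hw', Function.update_of_ne hr]
  rcases eq_or_lt_of_le hple with hpp | hpp
  · -- CONTINUATION : p' = p
    have hk'i : k' = i := kk_continuation hu' hne hne' hpp
    have hagree : ∀ c, c ≤ i → cnd u' p' c = cnd u p c := by
      intro c hc
      apply Finset.ext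
      intro j
      simp only [cnd, Finset.mem_filter, Finset.mem_Ico]
      constructor
      · rintro ⟨⟨h1, h2⟩, h3, h4⟩
        have he : u' j = u j := hu'at _ (by omega) (by omega)
        rw [he] at h3 h4
        exact ⟨⟨h1, h2⟩, h3, h4.trans (le_of_eq hpp)⟩
      · rintro ⟨⟨h1, h2⟩, h3, h4⟩
        have he : u' j = u j := hu'at _ (by omega) (by omega)
        rw [← he] at h3 h4
        exact ⟨⟨h1, h2⟩, h3, h4.trans (le_of_eq hpp.symm)⟩
    have hmveq : ∀ c, c ≤ i → mv u' p' c = mv u p c := by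
      intro c hc
      have himg : (cnd u p c).image u' = (cnd u p c).image u := by
        apply Finset.image_congr
        intro j hj
        have hj' := Finset.mem_filter.mp (Finset.mem_coe.mp hj)
        have hjI := Finset.mem_Ico.mp hj'.1
        exact hu'at _ (by omega) (by omega)
      show ((cnd u' p' c).image u').sup id = ((cnd u p c).image u).sup id
      rw [hagree c hc, himg]
    have hnxteq : ∀ c, c ≤ i → nxt u' p' c = nxt u p c := by
      intro c hc
      show ((Finset.Ico 1 c).filter (fun j => u' j = mv u' p' c)).sup id
        = ((Finset.Ico 1 c).filter (fun j => u j = mv u p c)).sup id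
      rw [hmveq c hc]
      congr 1
      apply Finset.filter_congr
      intro j hj
      have hjI := Finset.mem_Ico.mp hj
      rw [hu'at _ (by omega) (by omega)]
    have hm'eq : m' = mv u p i := by rw [hm'def, hk'i]; exact hmveq i le_rfl
    have hi'eq : i' = nxt u p i := by rw [hi'def, hk'i]; exact hnxteq i le_rfl
    have hAi : (cnd u p i).Nonempty := by
      rw [← hagree i le_rfl, ← hk'i]; exact hA'
    have hm'm : m' ≤ m := by
      obtain ⟨j, ⟨hj1, hji⟩, ⟨hj0, hjp⟩, hjm⟩ := mv_attained hAi
      have h1 : u j ≤ m := le_mv hj1 (by omega) hj0 hjp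
      omega
    refine ⟨?_, ?_, ?_⟩
    · show ∀ c, c ≤ k' → (cnd u' p' c).Nonempty → ∀ r, 0 < w' r →
        nxt u' p' c < r → r < c → False
      intro c hck' hAc r hwr h1 h2
      have hci : c ≤ i := by omega
      have hrk : r ≠ k := by omega
      rw [hw'at r hrk] at hwr
      have hAc2 : (cnd u p c).Nonempty := by rw [← hagree c hci]; exact hAc
      refine hC c (by omega) hAc2 r hwr ?_ h2
      rw [← hnxteq c hci]; exact h1
    · show ∀ a r, i' < a → a ≤ n → a ≠ k' → a < r → r ≤ n → r ≠ k' → 0 < w' r → u' a ≤ u' r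
      intro a r h1 h2 h3 h4 h5 h6 h7
      have hane : a ≠ i := by omega
      have hrne : r ≠ i := by omega
      by_cases hrk : r = k
      · rw [hrk, hu'k]
        by_cases hia : i < a
        · have hak : a < k := by omega
          have hva : u a < m := hval _ hia hak
          rw [hu'at _ hane (by omega)]
          omega
        · have hva : u' a < m' := hval' _ h1 (by omega)
          omega
      · rw [hw'at r hrk] at h7
        have hu'r : u' r = u r := hu'at _ hrne hrk
        by_cases hak : a = k
        · rw [hak, hu'k, hu'r]
          have := hD r (by omega) h5 h7
          omega
        · have hu'a : u' a = u a := hu'at _ hane hak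
          rw [hu'a, hu'r]
          by_cases hia : i < a
          · exact hB a r hia h2 hak h4 h5 hrk h7
          · have hai : a < i := by omega
            have hva : u' a < m' := hval' _ h1 (by omega)
            rw [hu'a] at hva
            rcases lt_trichotomy r i with hri | hri | hri
            · exact (hC i (le_of_lt hik) hAi r h7 (by omega) hri).elim
            · omega
            · rcases lt_trichotomy r k with hrk2 | hrk2 | hrk2
              · exact (hC k le_rfl hA r h7 hri hrk2).elim
              · omega
              · have := hD r hrk2 h5 h7
                omega
    · show ∀ r, k' < r → r ≤ n → 0 < w' r → m' - 1 ≤ u' r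
      intro r h1 h2 h3
      have hri : i < r := by omega
      by_cases hrk : r = k
      · rw [hrk, hu'k]; omega
      · rw [hw'at r hrk] at h3
        rw [hu'at _ (by omega) hrk]
        rcases lt_trichotomy r k with hh | hh | hh
        · exact (hC k le_rfl hA r h3 hri hh).elim
        · omega
        · have := hD r hh h2 h3; omega
  · -- RESTART : p' < p
    have hcab : ∀ j, 1 ≤ j → 0 < u' j → u' j ≤ p' → i < j := restart_cand_above hu' hne hne' hpp
    have hii' : i < i' := restart_i_lt hu' hne hne' hpp
    have hik'2 : i < k' := lt_trans hii' hi'k'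
    refine ⟨?_, ?_, ?_⟩
    · show ∀ c, c ≤ k' → (cnd u' p' c).Nonempty → ∀ r, 0 < w' r →
        nxt u' p' c < r → r < c → False
      intro c hck' hAc r hwr hxr hrc
      obtain ⟨⟨hx1, hxc⟩, hxm⟩ := nxt_mem hAc
      have hxmv0 : 0 < mv u' p' c := mv_pos hAc
      have hxmvP : mv u' p' c ≤ p' := mv_le hAc
      have hix : i < nxt u' p' c := hcab _ hx1 (by rw [hxm]; exact hxmv0)
        (by rw [hxm]; exact hxmvP)
      by_cases hrk : r = k
      · -- the old pivot position k lies in the gap : impossible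
        have hxk : nxt u' p' c < k := by omega
        have hu'x : u' (nxt u' p' c) = u (nxt u' p' c) :=
          hu'at _ (by omega) (by omega)
        have hvx : u (nxt u' p' c) < m := hval _ hix hxk
        have hmvx : mv u' p' c = u (nxt u' p' c) := by rw [← hxm, hu'x]
        by_cases hm1p : m - 1 ≤ p'
        · have hkc : u' k ≤ mv u' p' c :=
            le_mv (by omega) (by omega) (by rw [hu'k]; omega) (by rw [hu'k]; exact hm1p)
          rw [hu'k] at hkc
          have hkmv : u' k = mv u' p' c := by rw [hu'k]; omega
          have hkx : k ≤ nxt u' p' c := le_nxt (by omega) (by omega) hkmv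
          omega
        · have hkpiv : k ∈ pivotPositions n u' := by
            refine mem_pivotPositions.mpr ⟨⟨by omega, hkn⟩, nxt u' p' c, hx1, hxk, ?_, ?_⟩
            · rw [hxm]; exact hxmv0
            · rw [hxm, hu'k]; omega
          have hle : u' k ≤ p' := le_pv hkpiv
          rw [hu'k] at hle
          omega
      · rw [hw'at r hrk] at hwr
        have hri : r ≠ i := by omega
        have hu'r : u' r = u r := hu'at _ hri hrk
        rcases lt_trichotomy r k with hh | hh | hh
        · exact hC k le_rfl hA r hwr (by omega) hh
        · omega
        · have hDr : m - 1 ≤ u r := hD r hh (by omega) hwr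
          by_cases hxk : nxt u' p' c = k
          · have hmvx : mv u' p' c = m - 1 := by rw [← hxm, hxk, hu'k]
            rcases Nat.eq_zero_or_pos (u' r) with hr0 | hr0
            · rw [hu'r] at hr0
              omega
            · by_cases hrp : u' r ≤ p'
              · have h5 : u' r ≤ mv u' p' c := le_mv (by omega) hrc hr0 hrp
                have h6 : u' r ≠ mv u' p' c := by
                  intro he
                  have : r ≤ nxt u' p' c := le_nxt (by omega) hrc he
                  omega
                rw [hu'r] at h5 h6
                omega
              · push_neg at hrp
                have hrpiv : r ∈ pivotPositions n u' := by
                  refine mem_pivotPositions.mpr ⟨⟨by omega, by omega⟩, k, by omega, hh, ?_, ?_⟩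
                  · rw [hu'k]; omega
                  · rw [hu'k, hu'r]; omega
                have hle : u' r ≤ p' := le_pv hrpiv
                omega
          · have hu'x : u' (nxt u' p' c) = u (nxt u' p' c) := hu'at _ (by omega) hxk
            have hmvx : mv u' p' c = u (nxt u' p' c) := by rw [← hxm, hu'x]
            have hBx : u (nxt u' p' c) ≤ u r :=
              hB _ r hix (by omega) hxk (by omega) (by omega) hrk hwr
            rcases Nat.eq_zero_or_pos (u' r) with hr0 | hr0
            · rw [hu'r] at hr0
              omega
            · by_cases hrp : u' r ≤ p'
              · have h5 : u' r ≤ mv u' p' c := le_mv (by omega) hrc hr0 hrp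
                have h6 : u' r ≠ mv u' p' c := by
                  intro he
                  have : r ≤ nxt u' p' c := le_nxt (by omega) hrc he
                  omega
                rw [hu'r] at h5 h6
                omega
              · push_neg at hrp
                have hrpiv : r ∈ pivotPositions n u' := by
                  refine mem_pivotPositions.mpr ⟨⟨by omega, by omega⟩, nxt u' p' c,
                    hx1, by omega, ?_, ?_⟩
                  · rw [hxm]; exact hxmv0
                  · rw [hxm, hu'r]; omega
                have hle : u' r ≤ p' := le_pv hrpiv
                rw [hu'r] at hle
                omega
    · show ∀ a r, i' < a → a ≤ n → a ≠ k' → a < r → r ≤ n → r ≠ k' → 0 < w' r → u' a ≤ u' r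
      intro a r h1 h2 h3 h4 h5 h6 h7
      by_cases hrk : r = k
      · have hai : i < a := by omega
        have hak : a < k := by omega
        have hu'a : u' a = u a := hu'at _ (by omega) (by omega)
        have hva : u a < m := hval _ hai hak
        rw [hrk, hu'k, hu'a]
        omega
      · rw [hw'at r hrk] at h7
        have hu'r : u' r = u r := hu'at _ (by omega) hrk
        by_cases hak : a = k
        · rw [hak, hu'k, hu'r]
          have := hD r (by omega) h5 h7
          omega
        · have hu'a : u' a = u a := hu'at _ (by omega) hak
          rw [hu'a, hu'r]
          exact hB a r (by omega) h2 hak h4 h5 hrk h7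
    · show ∀ r, k' < r → r ≤ n → 0 < w' r → m' - 1 ≤ u' r
      intro r h1 h2 h3
      by_cases hrk : r = k
      · have hk'k : k' < k := by omega
        have hvk' : u k' < m := hval _ hik'2 hk'k
        have hu'k'2 : u' k' = u k' := hu'at _ (by omega) (by omega)
        have hpk' : p' = u k' := by rw [← hu'k'p', hu'k'2]
        rw [hrk, hu'k]
        omega
      · rw [hw'at r hrk] at h3
        have hu'r : u' r = u r := hu'at _ (by omega) hrk
        rw [hu'r]
        rcases lt_trichotomy r k with hh | hh | hh
        · exact (hC k le_rfl hA r h3 (by omega) hh).elim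
        · omega
        · have hDr := hD r hh h2 h3
          by_cases hi'k : i' = k
          · have hm'v : m' = m - 1 := by rw [← hu'i'm', hi'k, hu'k]
            omega
          · have hu'i'2 : u' i' = u i' := hu'at _ (by omega) hi'k
            have hm'v : u i' = m' := by rw [← hu'i'2, hu'i'm']
            have hBr : u i' ≤ u r := hB i' r (by omega) (by omega) hi'k (by omega) h2 hrk h3
            omega

end StepInv

section Plumbing

lemma phi1Step_spec {n : ℕ} {s : (ℕ → ℕ) × (ℕ → ℕ)} (h : (pivotPositions n s.1).Nonempty) :
    phi1Step n s = some
      (Function.update (Function.update s.1 (nxt s.1 (pv n s.1) (kk n s.1)) (s.1 (kk n s.1)))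
        (kk n s.1) (s.1 (nxt s.1 (pv n s.1) (kk n s.1)) - 1),
       Function.update s.2 (kk n s.1) (s.2 (kk n s.1) + 1)) := by
  simp only [phi1Step, if_pos h]
  rfl

lemma phi1Step_none {n : ℕ} {s : (ℕ → ℕ) × (ℕ → ℕ)} (h : ¬ (pivotPositions n s.1).Nonempty) :
    phi1Step n s = none := by
  simp only [phi1Step, if_neg h]

lemma phi1Iter_succ (n : ℕ) (t : ℕ) (s : (ℕ → ℕ) × (ℕ → ℕ)) :
    phi1Iter n (t + 1) s = (match phi1Step n (phi1Iter n t s) with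
      | none => phi1Iter n t s
      | some s' => s') := by
  induction t generalizing s with
  | zero =>
    show (match phi1Step n s with | none => s | some s' => phi1Iter n 0 s')
      = (match phi1Step n s with | none => s | some s' => s')
    rcases h : phi1Step n s with _ | s' <;> rfl
  | succ t ih =>
    rcases h : phi1Step n s with _ | s1
    · have e1 : ∀ t', phi1Iter n (t' + 1) s = s := by
        intro t'
        show (match phi1Step n s with | none => s | some s' => phi1Iter n t' s') = s
        rw [h]
      rw [e1 (t + 1), e1 t, h]
    · have e1 : ∀ t', phi1Iter n (t' + 1) s = phi1Iter n t' s1 := by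
        intro t'
        show (match phi1Step n s with | none => s | some s' => phi1Iter n t' s') = _
        rw [h]
      rw [e1 (t + 1), e1 t, ih s1]

lemma iter_inv (n : ℕ) (u0 : ℕ → ℕ) : ∀ t,
    (pivotPositions n (phi1Iter n t (u0, fun _ => 0)).1).Nonempty →
    Inv n (phi1Iter n t (u0, fun _ => 0)).1 (phi1Iter n t (u0, fun _ => 0)).2 := by
  intro t
  induction t with
  | zero =>
    intro _
    exact ⟨fun c _ _ r hr _ _ => by exact absurd hr (lt_irrefl 0),
      fun a r _ _ _ _ _ _ hr => by exact absurd hr (lt_irrefl 0),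
      fun r _ _ hr => by exact absurd hr (lt_irrefl 0)⟩
  | succ t ih =>
    intro hne'
    have hsucc := phi1Iter_succ n t (u0, fun _ => 0)
    by_cases hne : (pivotPositions n (phi1Iter n t (u0, fun _ => 0)).1).Nonempty
    · have hs := phi1Step_spec hne
      rw [hs] at hsucc
      rw [hsucc] at hne' ⊢
      exact step_inv hne (ih hne) hne' rfl rfl
    · rw [phi1Step_none hne] at hsucc
      rw [hsucc] at hne'
      exact absurd hne' hne

end Plumbing
end Phi1Aux

/-- In the sorting algorithm φ₁ (run on a subexcedent function), consider the weighted
subexcedent function `(u', w')` obtained just after an exchange of Step 2 moving the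
pivot from position `k` to position `i`.  Then both positions can be recovered:
`i` is the rightmost position having a strictly smaller weighted value to its right, and
`k` is the smallest position strictly greater than `i` carrying positive weight. -/
theorem phi1_exchange_recoverable (n : ℕ) (u0 : ℕ → ℕ) (hu : IsSubexc n u0) (t : ℕ)
    (s : (ℕ → ℕ) × (ℕ → ℕ)) (hs : s = phi1Iter n t (u0, fun _ => 0))
    (hne : (pivotPositions n s.1).Nonempty)
    (p k m i : ℕ)
    (hp : p = ((pivotPositions n s.1).image s.1).sup id)
    (hk : k = ((Finset.Icc 1 n).filter (fun x => s.1 x = p)).sup id)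
    (hm : m = (((Finset.Ico 1 k).filter (fun j => 0 < s.1 j ∧ s.1 j ≤ p)).image s.1).sup id)
    (hi : i = ((Finset.Ico 1 k).filter (fun j => s.1 j = m)).sup id)
    (u' w' : ℕ → ℕ)
    (hu' : u' = Function.update (Function.update s.1 i (s.1 k)) k (s.1 i - 1))
    (hw' : w' = Function.update s.2 k (s.2 k + 1)) :
    ((Finset.Icc 1 n).filter (fun a => ∃ r, a < r ∧ r ≤ n ∧ 0 < w' r ∧ u' r < u' a)).max
        = (i : WithBot ℕ) ∧
    ((Finset.Icc 1 n).filter (fun r => i < r ∧ 0 < w' r)).min = (k : WithTop ℕ) := by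
  have hInv := Phi1Aux.iter_inv n u0 t (hs ▸ hne)
  rw [← hs] at hInv
  subst hp
  subst hk
  subst hm
  subst hi
  subst hu'
  subst hw'
  exact Phi1Aux.step_claims hne hInv rfl rfl
end
end

section
/- Let u be a decreasing subexcedent function of size n and D the path of 2n steps built from u by the rule defining φ2, and for each i let h_i be the height of the meeting point of steps 2i−1 and 2i of D. Then for every i ∈ [1,n], (h_i − 1)/2 equals the number of positions j < i with 0 < u_j ≤ n−i. -/
open scoped Classical
noncomputable section

/-- The Dyck path of φ₂ built from a decreasing subexcedent function `u`:
`D 1` is up, `D (2n)` is down, `D (2i)` is down iff `n - i` is a value of `u`, and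
`D (2i+1)` is down iff `u i = 0`. -/
def phi2Path (n : ℕ) (u : ℕ → ℕ) : ℕ → Bool := fun m =>
  if m = 0 ∨ 2 * n < m then false
  else if m = 1 then true
  else if m = 2 * n then false
  else if m % 2 = 0 then
    if ∃ j ∈ Finset.Icc 1 n, u j = n - m / 2 then false else true
  else
    if u ((m - 1) / 2) = 0 then false else true

/-! ### Binary search trees -/

lemma hgt_succ (D : ℕ → Bool) (j : ℕ) :
    hgt D (j+1) = hgt D j + (if D (j+1) then (1:ℤ) else -1) := by
  unfold hgt
  rw [Finset.sum_Icc_succ_top (by omega)]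

lemma phi2_one (n : ℕ) (u : ℕ → ℕ) (hn : 1 ≤ n) : phi2Path n u 1 = true := by
  unfold phi2Path
  rw [if_neg (by omega), if_pos rfl]

lemma phi2_even (n : ℕ) (u : ℕ → ℕ) (i : ℕ) (hi1 : 1 ≤ i) (hi2 : i < n) :
    phi2Path n u (2*i) = if ∃ j ∈ Finset.Icc 1 n, u j = n - i then false else true := by
  unfold phi2Path
  have hd : 2 * i / 2 = i := by omega
  rw [if_neg (by omega), if_neg (by omega), if_neg (by omega), if_pos (by omega), hd]

lemma phi2_odd (n : ℕ) (u : ℕ → ℕ) (i : ℕ) (hi1 : 1 ≤ i) (hi2 : i < n) :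
    phi2Path n u (2*i+1) = if u i = 0 then false else true := by
  unfold phi2Path
  have hd : (2 * i + 1 - 1) / 2 = i := by omega
  rw [if_neg (by omega), if_neg (by omega), if_neg (by omega), if_neg (by omega), hd]

lemma phi2_key (n : ℕ) (u : ℕ → ℕ) (h1 : IsSubexc n u) (h2 : IsDecr n u) :
    ∀ i, i ≤ n → 1 ≤ i →
      hgt (phi2Path n u) (2*i-1)
        = 2 * (((Finset.Ico 1 i).filter (fun j => 0 < u j ∧ u j ≤ n - i)).card : ℤ) + 1 := by
  intro i
  induction i with
  | zero => intro _ h; exact absurd h (by omega)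
  | succ k ih =>
    intro hkn _
    by_cases hk0 : k = 0
    · subst hk0
      have hn : 1 ≤ n := hkn
      have hh : hgt (phi2Path n u) 1 = 1 := by
        unfold hgt
        rw [Finset.Icc_self, Finset.sum_singleton, phi2_one n u hn]
        simp
      have h21 : 2 * (0+1) - 1 = 1 := by omega
      rw [h21, hh]
      simp
    · have hk1 : 1 ≤ k := by omega
      have hkn' : k ≤ n := by omega
      have hklt : k < n := by omega
      have ihk := ih hkn' hk1
      have e1 : 2*(k+1)-1 = (2*k-1) + 1 + 1 := by omega
      have e2 : 2*k-1+1 = 2*k := by omega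
      have e3 : 2*k-1+1+1 = 2*k+1 := by omega
      rw [e1, hgt_succ, hgt_succ, e2, ihk,
        phi2_even n u k hk1 hklt, phi2_odd n u k hk1 hklt]
      set P : Prop := ∃ j ∈ Finset.Icc 1 n, u j = n - k with hPdef
      have huk_le : u k ≤ n - k := h1.1 k hk1 hkn'
      -- split off j = k
      have hins : Finset.Ico 1 (k+1) = insert k (Finset.Ico 1 k) := by
        ext j; simp [Finset.mem_Ico]; omega
      have hA : ((Finset.Ico 1 (k+1)).filter (fun j => 0 < u j ∧ u j ≤ n - (k+1))).card
          = ((Finset.Ico 1 k).filter (fun j => 0 < u j ∧ u j ≤ n - (k+1))).card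
            + (if 0 < u k ∧ u k ≤ n - (k+1) then 1 else 0) := by
        rw [hins, Finset.filter_insert]
        by_cases h : 0 < u k ∧ u k ≤ n - (k+1)
        · rw [if_pos h, if_pos h, Finset.card_insert_of_notMem]
          simp [Finset.mem_filter, Finset.mem_Ico]
        · rw [if_neg h, if_neg h, add_zero]
      have hB : ((Finset.Ico 1 k).filter (fun j => 0 < u j ∧ u j ≤ n - k)).card
          = ((Finset.Ico 1 k).filter (fun j => 0 < u j ∧ u j ≤ n - (k+1))).card
            + ((Finset.Ico 1 k).filter (fun j => u j = n - k)).card := by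
        have hcong : (Finset.Ico 1 k).filter (fun j => 0 < u j ∧ u j ≤ n - k)
            = (Finset.Ico 1 k).filter
                (fun j => (0 < u j ∧ u j ≤ n - (k+1)) ∨ u j = n - k) :=
          Finset.filter_congr (fun j _ => by omega)
        have hdis : Disjoint
            ((Finset.Ico 1 k).filter (fun j => 0 < u j ∧ u j ≤ n - (k+1)))
            ((Finset.Ico 1 k).filter (fun j => u j = n - k)) := by
          rw [Finset.disjoint_left]
          intro a ha hb
          simp [Finset.mem_filter] at ha hb
          omega
        rw [hcong, Finset.filter_or, Finset.card_union_of_disjoint hdis]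
      have hPuk : u k = n - k → P := fun hc => ⟨k, Finset.mem_Icc.mpr ⟨hk1, hkn'⟩, hc⟩
      have loc : ∀ j, 1 ≤ j → j ≤ n → u j = n - k → j ≤ k := by
        intro j hj1 hj2 hj3
        have := h1.1 j hj1 hj2
        omega
      have uniq : ∀ a b, 1 ≤ a → a ≤ n → 1 ≤ b → b ≤ n →
          u a = n - k → u b = n - k → a = b := by
        intro a b ha1 ha2 hb1 hb2 hua hub
        by_contra hne
        rcases lt_or_gt_of_ne hne with h | h
        · exact absurd (h2 a b ha1 h hb2 (by omega) (by omega)) (by omega)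
        · exact absurd (h2 b a hb1 h ha2 (by omega) (by omega)) (by omega)
      have hC : ((Finset.Ico 1 k).filter (fun j => u j = n - k)).card
          = if u k = n - k then 0 else (if P then 1 else 0) := by
        by_cases hceq : u k = n - k
        · rw [if_pos hceq, Finset.card_eq_zero, Finset.filter_eq_empty_iff]
          intro j hj
          simp [Finset.mem_Ico] at hj
          intro hj2
          have := h2 j k hj.1 hj.2 hkn' (by omega) (by omega)
          omega
        · rw [if_neg hceq]
          by_cases hp : P
          · rw [if_pos hp]
            obtain ⟨j, hjmem, hju⟩ := hp
            simp [Finset.mem_Icc] at hjmem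
            have hjk : j < k := by
              have := loc j hjmem.1 hjmem.2 hju
              rcases Nat.lt_or_ge j k with h | h
              · exact h
              · exfalso; have : j = k := by omega
                subst this; exact hceq hju
            refine le_antisymm ?_ ?_
            · refine Finset.card_le_one.mpr (fun a ha b hb => ?_)
              simp [Finset.mem_filter, Finset.mem_Ico] at ha hb
              exact uniq a b ha.1.1 (by omega) hb.1.1 (by omega) ha.2 hb.2
            · exact Finset.card_pos.mpr
                ⟨j, Finset.mem_filter.mpr ⟨Finset.mem_Ico.mpr ⟨hjmem.1, hjk⟩, hju⟩⟩
          · rw [if_neg hp, Finset.card_eq_zero, Finset.filter_eq_empty_iff]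
            intro j hj
            simp [Finset.mem_Ico] at hj
            intro hj2
            exact hp ⟨j, Finset.mem_Icc.mpr ⟨hj.1, by omega⟩, hj2⟩
      by_cases hceq : u k = n - k
      · have hp : P := hPuk hceq
        have hu0 : ¬ (u k = 0) := by omega
        rw [if_pos hceq] at hC
        rw [if_neg (by omega)] at hA
        simp only [hp, hu0, if_true, if_false, ite_true, ite_false]
        simp [hp, hu0]
        omega
      · by_cases hu0 : u k = 0
        · rw [if_neg (by omega)] at hA
          rw [if_neg hceq] at hC
          by_cases hp : P
          · rw [if_pos hp] at hC
            simp [hp, hu0]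
            omega
          · rw [if_neg hp] at hC
            simp [hp, hu0]
            omega
        · rw [if_pos (by omega)] at hA
          rw [if_neg hceq] at hC
          by_cases hp : P
          · rw [if_pos hp] at hC
            simp [hp, hu0]
            omega
          · rw [if_neg hp] at hC
            simp [hp, hu0]
            omega

/-- Lemma: in the path `D` built by φ₂ from a decreasing subexcedent function `u` of
size `n`, for every `i ∈ [1,n]`, `(h_i - 1)/2` equals the number of positions `j < i`
with `0 < u j ≤ n - i`, where `h_i` is the height of the meeting point of steps
`2i-1` and `2i`. -/
theorem phi2_height (n : ℕ) (u : ℕ → ℕ) (h1 : IsSubexc n u) (h2 : IsDecr n u)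
    (i : ℕ) (hi1 : 1 ≤ i) (hi2 : i ≤ n) :
    (hgt (phi2Path n u) (2 * i - 1) - 1) / 2 =
      (((Finset.Ico 1 i).filter (fun j => 0 < u j ∧ u j ≤ n - i)).card : ℤ) := by
  have := phi2_key n u h1 h2 i hi2 hi1
  omega
end
end

section
/- The number of decreasing weighted subexcedent functions of size n is n!. -/
open scoped Classical
noncomputable section

/-!
Read a nonzero value `u i` as an arc from `i` to the position `n + 1 - u i` where it closes.
Then `u` is decreasing exactly when arcs opened earlier also close earlier, and the bound on
`w k` is the number of arcs passing over `k`. Allow `h` arcs that are still open after the last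
position. Position `n + 1` of such a weighted arc system of size `n + 1` opens an arc or not,
closes the oldest open arc or not, and carries one of the `h + 1 - [it opens]` admissible weights;
removing it leaves a system of size `n` with `h + [it closes] - [it opens]` open arcs, and this is
a bijection. So the number `H n h` of these systems satisfies
`H (n + 1) h = (2h + 1) H n h + (h + 1) H n (h + 1) + h H n (h - 1)`, which is solved by
`n! * C(n, h)`, and `h = 0` gives the theorem.
-/

open Finset
open Function (update update_self update_of_ne update_idem update_eq_self)

/-! ### Weighted arc systems -/

/-- `t i` is the position where the arc starting at `i` closes: `0` if no arc starts at `i`,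
`n + 1` if the arc is still open after position `n`. -/
structure IsArcs (n : ℕ) (t : ℕ → ℕ) : Prop where
  arc : ∀ i, t i ≠ 0 → 1 ≤ i ∧ i < t i ∧ t i ≤ n + 1
  fifo : ∀ i j, i < j → t i ≠ 0 → t j ≠ 0 → t j ≤ n → t i < t j

def openCount (n : ℕ) (t : ℕ → ℕ) : ℕ :=
  #{i ∈ Icc 1 n | t i = n + 1}

def spanCount (t : ℕ → ℕ) (k : ℕ) : ℕ :=
  #{i ∈ Ico 1 k | k < t i}

structure IsHistory (n h : ℕ) (t w : ℕ → ℕ) : Prop where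
  isArcs : IsArcs n t
  openCount_eq : openCount n t = h
  weight_le : ∀ k, w k ≤ spanCount t k

def History (n h : ℕ) : Type :=
  {p : (ℕ → ℕ) × (ℕ → ℕ) // IsHistory n h p.1 p.2}

theorem exists_of_openCount_pos {n : ℕ} {t : ℕ → ℕ} (ht : 0 < openCount n t) :
    ∃ i, t i = n + 1 := by
  obtain ⟨i, hi⟩ := card_pos.1 ht
  exact ⟨i, (mem_filter.1 hi).2⟩

namespace IsArcs

variable {n : ℕ} {t : ℕ → ℕ}

theorem le (ht : IsArcs n t) (i : ℕ) : t i ≤ n + 1 := by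
  by_cases hi : t i = 0
  · omega
  · exact (ht.arc i hi).2.2

theorem eq_zero_of_lt (ht : IsArcs n t) {i : ℕ} (hi : n < i) : t i = 0 := by
  by_contra hne
  have := ht.arc i hne
  omega

theorem spanCount_eq_zero (ht : IsArcs n t) {k : ℕ} (hk : n < k) : spanCount t k = 0 := by
  rw [spanCount, card_eq_zero, filter_eq_empty_iff]
  intro i _ hi
  have := ht.le i
  omega

theorem eq_of_closing_eq (ht : IsArcs n t) {i j : ℕ} (hij : t i = t j) (hj0 : t j ≠ 0)
    (hjn : t j ≤ n) : i = j := by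
  rcases lt_trichotomy i j with h | h | h
  · have := ht.fifo i j h (by omega) hj0 hjn
    omega
  · exact h
  · have := ht.fifo j i h hj0 (by omega) (by omega)
    omega

theorem le_of_openCount_eq_zero (ht : IsArcs n t) (h0 : openCount n t = 0) (i : ℕ) :
    t i ≤ n := by
  have hopen : t i ≠ n + 1 := by
    intro hi
    have := ht.arc i (by omega)
    rw [openCount, card_eq_zero, filter_eq_empty_iff] at h0
    exact h0 (mem_Icc.2 (by omega)) hi
  have := ht.le i
  omega

end IsArcs

/-! ### Decreasing weighted subexcedent functions as arc systems -/

def reflect (n : ℕ) (f : ℕ → ℕ) (i : ℕ) : ℕ :=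
  if f i = 0 then 0 else n + 1 - f i

theorem reflect_reflect {n : ℕ} {f : ℕ → ℕ} (hf : ∀ i, f i ≤ n) :
    reflect n (reflect n f) = f := by
  funext i
  have := hf i
  unfold reflect
  split_ifs <;> omega

theorem spanCount_reflect (n : ℕ) (u : ℕ → ℕ) : spanCount (reflect n u) = maxW n u := by
  funext k
  unfold spanCount maxW reflect
  congr 1
  refine filter_congr fun i _ => ?_
  split_ifs <;> omega

theorem maxW_eq_zero {n k : ℕ} (u : ℕ → ℕ) (hk : k = 0 ∨ n < k) : maxW n u k = 0 := by
  rw [maxW, card_eq_zero, filter_eq_empty_iff]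
  intro i hi
  rw [mem_Ico] at hi
  omega

namespace IsSubexc

variable {n : ℕ} {u : ℕ → ℕ}

theorem le (hu : IsSubexc n u) (i : ℕ) : u i ≤ n := by
  by_cases hi : 1 ≤ i ∧ i ≤ n
  · have := hu.1 i hi.1 hi.2
    omega
  · rw [hu.2 i (by omega)]
    exact Nat.zero_le _

theorem isArcs_reflect (hu : IsSubexc n u) (hd : IsDecr n u) : IsArcs n (reflect n u) where
  arc i hi := by
    have h0 : u i ≠ 0 := fun h => hi (if_pos h)
    have hi0 : 1 ≤ i ∧ i ≤ n := by
      by_contra hc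
      exact h0 (hu.2 i (by omega))
    have := hu.1 i hi0.1 hi0.2
    rw [reflect, if_neg h0]
    omega
  fifo i j hij hi hj _ := by
    have hi0 : u i ≠ 0 := fun h => hi (if_pos h)
    have hj0 : u j ≠ 0 := fun h => hj (if_pos h)
    have hi1 : 1 ≤ i := by
      by_contra hc
      exact hi0 (hu.2 i (by omega))
    have hjn : j ≤ n := by
      by_contra hc
      exact hj0 (hu.2 j (by omega))
    have := hd i j hi1 hij hjn (by omega) (by omega)
    have := hu.le i
    rw [reflect, reflect, if_neg hi0, if_neg hj0]
    omega

theorem openCount_reflect (hu : IsSubexc n u) : openCount n (reflect n u) = 0 := by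
  rw [openCount, card_eq_zero, filter_eq_empty_iff]
  intro i _ hi
  have := hu.le i
  unfold reflect at hi
  split_ifs at hi
  omega

end IsSubexc

theorem IsValidW.le_spanCount_reflect {n : ℕ} {u w : ℕ → ℕ} (hw : IsValidW n u w)
    (k : ℕ) :
    w k ≤ spanCount (reflect n u) k := by
  rw [spanCount_reflect]
  by_cases hk : 1 ≤ k ∧ k ≤ n
  · exact hw.1 k hk.1 hk.2
  · rw [hw.2 k (by omega)]
    exact Nat.zero_le _

namespace IsArcs

variable {n : ℕ} {t : ℕ → ℕ}

theorem isSubexc_reflect (ht : IsArcs n t) : IsSubexc n (reflect n t) := by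
  refine ⟨fun j _ _ => ?_, fun j hj => ?_⟩ <;> unfold _root_.reflect <;> split_ifs with h0
  · exact Nat.zero_le _
  · have := ht.arc j h0
    omega
  · rfl
  · have := ht.arc j h0
    omega

theorem isDecr_reflect (ht : IsArcs n t) (h0 : openCount n t = 0) : IsDecr n (reflect n t) := by
  intro i j _ hij _ hi hj
  have hti : t i ≠ 0 := fun h => by simp [_root_.reflect, h] at hi
  have htj : t j ≠ 0 := fun h => by simp [_root_.reflect, h] at hj
  have := ht.fifo i j hij hti htj (ht.le_of_openCount_eq_zero h0 j)
  have := ht.le_of_openCount_eq_zero h0 i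
  rw [_root_.reflect, _root_.reflect, if_neg hti, if_neg htj]
  omega

theorem isValidW_reflect {w : ℕ → ℕ} (ht : IsArcs n t) (h0 : openCount n t = 0)
    (hw : ∀ k, w k ≤ spanCount t k) : IsValidW n (reflect n t) w := by
  have hmaxW : maxW n (reflect n t) = spanCount t := by
    rw [← spanCount_reflect, reflect_reflect (ht.le_of_openCount_eq_zero h0)]
  refine ⟨fun k _ _ => hmaxW ▸ hw k, fun k hk => ?_⟩
  have := hw k
  rwa [← hmaxW, maxW_eq_zero _ hk, Nat.le_zero] at this

end IsArcs

def dwsfEquivHistory (n : ℕ) :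
    {p : (ℕ → ℕ) × (ℕ → ℕ) //
      IsSubexc n p.1 ∧ IsDecr n p.1 ∧ IsValidW n p.1 p.2} ≃ History n 0 where
  toFun p := ⟨(reflect n p.1.1, p.1.2),
    ⟨p.2.1.isArcs_reflect p.2.2.1, p.2.1.openCount_reflect, p.2.2.2.le_spanCount_reflect⟩⟩
  invFun x := ⟨(reflect n x.1.1, x.1.2), x.2.isArcs.isSubexc_reflect,
    x.2.isArcs.isDecr_reflect x.2.openCount_eq,
    x.2.isArcs.isValidW_reflect x.2.openCount_eq x.2.weight_le⟩
  left_inv p := Subtype.ext (Prod.ext (reflect_reflect p.2.1.le) rfl)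
  right_inv x := Subtype.ext
    (Prod.ext (reflect_reflect (x.2.isArcs.le_of_openCount_eq_zero x.2.openCount_eq)) rfl)

/-! ### Removing the last position -/

def truncate (n : ℕ) (t : ℕ → ℕ) : ℕ → ℕ :=
  update (fun i => min (t i) (n + 1)) (n + 1) 0

def firstOpen (n : ℕ) (t : ℕ → ℕ) : ℕ :=
  sInf {i | t i = n + 1}

theorem firstOpen_spec {n : ℕ} {t : ℕ → ℕ} (h : ∃ i, t i = n + 1) :
    t (firstOpen n t) = n + 1 :=
  Nat.sInf_mem h

theorem firstOpen_le {n i : ℕ} {t : ℕ → ℕ} (hi : t i = n + 1) : firstOpen n t ≤ i :=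
  Nat.sInf_le hi

/-- Appends position `n + 1`, which opens an arc iff `b` and closes the oldest open arc iff `c`;
the other open arcs stay open. -/
def extend (n : ℕ) (b c : Bool) (t : ℕ → ℕ) : ℕ → ℕ :=
  update (fun i => if t i = n + 1 ∧ ¬(c ∧ i = firstOpen n t) then n + 2 else t i)
    (n + 1) (if b then n + 2 else 0)

def lastStep (n : ℕ) (t : ℕ → ℕ) : Bool × Bool :=
  (decide (t (n + 1) ≠ 0), decide (∃ i, t i = n + 1))

theorem extend_last (n : ℕ) (b c : Bool) (t : ℕ → ℕ) :
    extend n b c t (n + 1) = if b then n + 2 else 0 :=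
  update_self _ _ _

theorem extend_of_ne {n i : ℕ} (b c : Bool) (t : ℕ → ℕ) (hi : i ≠ n + 1) :
    extend n b c t i = if t i = n + 1 ∧ ¬(c ∧ i = firstOpen n t) then n + 2 else t i :=
  update_of_ne hi _ _

theorem spanCount_truncate {n k : ℕ} (t : ℕ → ℕ) (hk : k ≤ n) :
    spanCount (truncate n t) k = spanCount t k := by
  unfold spanCount
  congr 1
  refine filter_congr fun i hi => ?_
  rw [mem_Ico] at hi
  rw [truncate, update_of_ne (by omega), lt_min_iff]
  omega

namespace IsArcs

variable {n : ℕ} {t w : ℕ → ℕ} {b c : Bool}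

theorem last_eq_zero_or (ht : IsArcs (n + 1) t) : t (n + 1) = 0 ∨ t (n + 1) = n + 2 := by
  by_cases h0 : t (n + 1) = 0
  · exact Or.inl h0
  · have := ht.arc _ h0
    omega

protected theorem truncate (ht : IsArcs (n + 1) t) : IsArcs n (truncate n t) where
  arc i hi := by
    have hi' : i ≠ n + 1 := by rintro rfl; simp [truncate] at hi
    rw [truncate, update_of_ne hi'] at hi ⊢
    have := ht.arc i (by omega)
    omega
  fifo i j hij hi hj hjn := by
    have hi' : i ≠ n + 1 := by rintro rfl; simp [truncate] at hi
    have hj' : j ≠ n + 1 := by rintro rfl; simp [truncate] at hj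
    simp only [truncate, update_of_ne hi', update_of_ne hj'] at hi hj hjn ⊢
    have := ht.fifo i j hij (by omega) (by omega) (by omega)
    omega

theorem openCount_succ (ht : IsArcs (n + 1) t) :
    openCount (n + 1) t = #{i ∈ Icc 1 n | t i = n + 2} + (lastStep n t).1.toNat := by
  rw [openCount, ← insert_Icc_right_eq_Icc_add_one (by omega), filter_insert]
  rcases ht.last_eq_zero_or with h | h <;> simp [lastStep, h]

theorem spanCount_last (ht : IsArcs (n + 1) t) :
    spanCount t (n + 1) + (lastStep n t).1.toNat = openCount (n + 1) t := by
  rw [ht.openCount_succ, spanCount, Ico_add_one_right_eq_Icc]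
  congr 2
  refine filter_congr fun i _ => ?_
  have := ht.le i
  omega

theorem card_closing_last (ht : IsArcs (n + 1) t) :
    #{i ∈ Icc 1 n | t i = n + 1} = (lastStep n t).2.toNat := by
  by_cases hc : ∃ i, t i = n + 1
  · obtain ⟨p, hp⟩ := hc
    have := ht.arc p (by omega)
    have hc : (lastStep n t).2 = true := decide_eq_true ⟨p, hp⟩
    rw [hc, Bool.toNat_true, card_eq_one]
    refine ⟨p, ext fun i => ?_⟩
    simp only [mem_filter, mem_Icc, mem_singleton]
    constructor
    · rintro ⟨_, hi⟩
      exact ht.eq_of_closing_eq (hi.trans hp.symm) (by omega) (by omega)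
    · rintro rfl
      exact ⟨by omega, hp⟩
  · have hc' : (lastStep n t).2 = false := decide_eq_false hc
    rw [hc', Bool.toNat_false, card_eq_zero, filter_eq_empty_iff]
    exact fun i _ hi => hc ⟨i, hi⟩

theorem openCount_truncate (ht : IsArcs (n + 1) t) :
    openCount n (truncate n t) + (lastStep n t).1.toNat =
      openCount (n + 1) t + (lastStep n t).2.toNat := by
  have hsplit : openCount n (truncate n t) =
      #{i ∈ Icc 1 n | t i = n + 1} + #{i ∈ Icc 1 n | t i = n + 2} := by
    rw [← card_union_of_disjoint (disjoint_filter.2 fun i _ h => by omega), ← filter_or,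
      openCount]
    congr 1
    refine filter_congr fun i hi => ?_
    rw [truncate, update_of_ne (by rw [mem_Icc] at hi; omega)]
    have := ht.le i
    omega
  rw [hsplit, ht.openCount_succ, ht.card_closing_last]
  ring

theorem firstOpen_truncate (ht : IsArcs (n + 1) t) {p : ℕ} (hp : t p = n + 1) :
    firstOpen n (truncate n t) = p := by
  have htp : truncate n t p = n + 1 := by
    have := ht.arc p (by omega)
    rw [truncate, update_of_ne (by omega), hp, min_self]
  have hle : firstOpen n (truncate n t) ≤ p := firstOpen_le htp
  set q := firstOpen n (truncate n t)
  have htq : truncate n t q = n + 1 := firstOpen_spec ⟨p, htp⟩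
  have hq : q ≠ n + 1 := by rintro hq; simp [hq, truncate] at htq
  rw [truncate, update_of_ne hq] at htq
  rcases (by have := ht.le q; omega : t q = n + 1 ∨ t q = n + 2) with h | h
  · exact ht.eq_of_closing_eq (h.trans hp.symm) (by omega) (by omega)
  · have hqp : q < p := lt_of_le_of_ne hle fun e => by rw [e] at h; omega
    have := ht.fifo q p hqp (by omega) (by omega) (by omega)
    omega

theorem extend_truncate (ht : IsArcs (n + 1) t) :
    extend n (lastStep n t).1 (lastStep n t).2 (truncate n t) = t := by
  funext i
  rcases eq_or_ne i (n + 1) with rfl | hi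
  · rw [extend_last]
    rcases ht.last_eq_zero_or with h | h <;> simp [lastStep, h]
  rw [extend_of_ne _ _ _ hi]
  have htr : truncate n t i = min (t i) (n + 1) := by rw [truncate, update_of_ne hi]
  rw [htr]
  by_cases hopen : t i = n + 1 ∨ t i = n + 2
  · rw [show min (t i) (n + 1) = n + 1 by omega]
    rcases hopen with h | h
    · have hc : (lastStep n t).2 = true := decide_eq_true ⟨i, h⟩
      rw [if_neg (by rw [hc, ht.firstOpen_truncate h]; simp), h]
    · have hnot : ¬((lastStep n t).2 = true ∧ i = firstOpen n (truncate n t)) := by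
        rintro ⟨hc, rfl⟩
        obtain ⟨p, hp⟩ := of_decide_eq_true hc
        rw [ht.firstOpen_truncate hp] at h
        omega
      rw [if_pos ⟨rfl, hnot⟩, h]
  · have := ht.le i
    rw [if_neg (by omega)]
    omega

theorem truncate_extend (ht : IsArcs n t) (b c : Bool) : truncate n (extend n b c t) = t := by
  funext i
  rcases eq_or_ne i (n + 1) with rfl | hi
  · rw [truncate, update_self, ht.eq_zero_of_lt (by omega)]
  · rw [truncate, update_of_ne hi, extend_of_ne b c t hi]
    have := ht.le i
    split_ifs <;> omega

protected theorem extend (ht : IsArcs n t) : IsArcs (n + 1) (extend n b c t) where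
  arc i hi := by
    rcases eq_or_ne i (n + 1) with rfl | hi'
    · rw [extend_last] at hi ⊢
      split_ifs at hi ⊢ <;> omega
    · rw [extend_of_ne b c t hi'] at hi ⊢
      split_ifs at hi ⊢ with h
      · have := ht.arc i (by omega)
        omega
      · have := ht.arc i hi
        omega
  fifo i j hij hi hj hjn := by
    have hj' : j ≠ n + 1 := by
      rintro rfl
      rw [extend_last] at hj hjn
      split_ifs at hj hjn <;> omega
    rw [extend_of_ne b c t hj'] at hj hjn ⊢
    have htj : t j ≠ 0 := by split_ifs at hj <;> omega
    have hi' : i ≠ n + 1 := by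
      have := ht.arc j htj
      omega
    rw [extend_of_ne b c t hi'] at hi ⊢
    have hti : t i ≠ 0 := by split_ifs at hi <;> omega
    by_cases hJ : t j = n + 1 ∧ ¬(c ∧ j = firstOpen n t)
    · rw [if_pos hJ] at hjn
      omega
    rw [if_neg hJ] at hjn ⊢
    have hlt : t i < t j := by
      by_cases htjn : t j ≤ n
      · exact ht.fifo i j hij hti htj htjn
      · have hj1 : t j = n + 1 := by
          have := ht.le j
          omega
        -- `j` is the oldest open arc, so the arc opened at `i < j` is closed
        have hfirst : j = firstOpen n t := (not_and_not_right.1 hJ hj1).2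
        have hi1 : t i ≠ n + 1 := fun h => by
          have := firstOpen_le h
          omega
        have := ht.le i
        omega
    rw [if_neg (by omega)]
    exact hlt

theorem lastStep_extend (ht : IsArcs n t) (hc : c → ∃ i, t i = n + 1) :
    lastStep n (extend n b c t) = (b, c) := by
  refine Prod.ext ?_ ?_
  · simp only [lastStep, extend_last]
    cases b <;> simp
  simp only [lastStep]
  cases c
  · simp only [decide_eq_false_iff_not, not_exists]
    intro i
    rcases eq_or_ne i (n + 1) with rfl | hi
    · rw [extend_last]
      split_ifs <;> simp
    · rw [extend_of_ne _ _ _ hi]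
      split_ifs with h <;> simp_all
  · obtain ⟨p, hp⟩ := hc rfl
    have hfirst := firstOpen_spec ⟨p, hp⟩
    have hne : firstOpen n t ≠ n + 1 := fun h => by
      rw [h, ht.eq_zero_of_lt (by omega)] at hfirst
      omega
    simp only [decide_eq_true_iff]
    exact ⟨firstOpen n t, by rw [extend_of_ne _ _ _ hne, if_neg (by simp), hfirst]⟩

theorem openCount_extend (ht : IsArcs n t) (hc : c → ∃ i, t i = n + 1) :
    openCount (n + 1) (extend n b c t) + c.toNat = openCount n t + b.toNat := by
  have := (ht.extend (b := b) (c := c)).openCount_truncate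
  simp only [ht.truncate_extend, ht.lastStep_extend hc] at this
  omega

theorem weight_truncate (ht : IsArcs (n + 1) t) (hw : ∀ k, w k ≤ spanCount t k) (k : ℕ) :
    update w (n + 1) 0 k ≤ spanCount (truncate n t) k := by
  rcases eq_or_ne k (n + 1) with rfl | hk
  · rw [update_self]
    exact Nat.zero_le _
  rw [update_of_ne hk]
  rcases le_or_gt k n with hkn | hkn
  · rw [spanCount_truncate t hkn]
    exact hw k
  · have := hw k
    rw [ht.spanCount_eq_zero (by omega)] at this
    omega

theorem weight_extend (ht : IsArcs n t) (hw : ∀ k, w k ≤ spanCount t k) {j : ℕ}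
    (hj : j ≤ spanCount (extend n b c t) (n + 1)) (k : ℕ) :
    update w (n + 1) j k ≤ spanCount (extend n b c t) k := by
  rcases eq_or_ne k (n + 1) with rfl | hk
  · rwa [update_self]
  rw [update_of_ne hk]
  rcases le_or_gt k n with hkn | hkn
  · rw [← spanCount_truncate _ hkn, ht.truncate_extend]
    exact hw k
  · have := hw k
    rw [ht.spanCount_eq_zero hkn] at this
    omega

end IsArcs

namespace IsHistory

variable {n h j : ℕ} {t w : ℕ → ℕ} {b c : Bool}

theorem last_lt (hx : IsHistory (n + 1) h t w) (hbc : lastStep n t = (b, c)) :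
    w (n + 1) < h + 1 - b.toNat := by
  have hspan := hx.isArcs.spanCount_last
  simp only [hbc, hx.openCount_eq] at hspan
  have := hx.weight_le (n + 1)
  omega

protected theorem truncate (hx : IsHistory (n + 1) h t w) (hbc : lastStep n t = (b, c)) :
    IsHistory n (h + c.toNat - b.toNat) (truncate n t) (update w (n + 1) 0) := by
  refine ⟨hx.isArcs.truncate, ?_, hx.isArcs.weight_truncate hx.weight_le⟩
  have := hx.isArcs.openCount_truncate
  simp only [hbc, hx.openCount_eq] at this
  omega

theorem exists_open (hx : IsHistory n (h + c.toNat - b.toNat) t w)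
    (hj : j < h + 1 - b.toNat) (hc : c) : ∃ i, t i = n + 1 := by
  apply exists_of_openCount_pos
  rw [hx.openCount_eq, hc]
  simp only [Bool.toNat_true] at hj ⊢
  omega

theorem lastStep_extend (hx : IsHistory n (h + c.toNat - b.toNat) t w)
    (hj : j < h + 1 - b.toNat) : lastStep n (extend n b c t) = (b, c) :=
  hx.isArcs.lastStep_extend (hx.exists_open hj)

protected theorem extend (hx : IsHistory n (h + c.toNat - b.toNat) t w)
    (hj : j < h + 1 - b.toNat) :
    IsHistory (n + 1) h (extend n b c t) (update w (n + 1) j) := by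
  have hcount := hx.isArcs.openCount_extend (b := b) (hx.exists_open hj)
  have hspan := (hx.isArcs.extend (b := b) (c := c)).spanCount_last
  rw [hx.lastStep_extend hj] at hspan
  rw [hx.openCount_eq] at hcount
  have hopen : openCount (n + 1) (extend n b c t) = h := by
    have := b.toNat_le
    omega
  refine ⟨hx.isArcs.extend, hopen, hx.isArcs.weight_extend hx.weight_le ?_⟩
  simp only [hopen] at hspan
  omega

end IsHistory

def lastStepFiberEquiv (n h : ℕ) (b c : Bool) :
    {x : History (n + 1) h // lastStep n x.1.1 = (b, c)} ≃
      Fin (h + 1 - b.toNat) × History n (h + c.toNat - b.toNat) where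
  toFun x := (⟨x.1.1.2 (n + 1), x.1.2.last_lt x.2⟩,
    ⟨(truncate n x.1.1.1, update x.1.1.2 (n + 1) 0), x.1.2.truncate x.2⟩)
  invFun y := ⟨⟨(extend n b c y.2.1.1, update y.2.1.2 (n + 1) y.1), y.2.2.extend y.1.2⟩,
    y.2.2.lastStep_extend y.1.2⟩
  left_inv x := by
    have hext := x.1.2.isArcs.extend_truncate
    rw [x.2] at hext
    exact Subtype.ext (Subtype.ext (Prod.ext hext ((update_idem _ _ _).trans (update_eq_self _ _))))
  right_inv y := by
    have hw : y.2.1.2 (n + 1) = 0 := by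
      have := y.2.2.weight_le (n + 1)
      rwa [y.2.2.isArcs.spanCount_eq_zero (by omega), Nat.le_zero] at this
    refine Prod.ext (Fin.ext (update_self _ _ _)) (Subtype.ext (Prod.ext ?_ ?_))
    · exact y.2.2.isArcs.truncate_extend b c
    · exact (update_idem _ _ _).trans (hw ▸ update_eq_self _ _)

def historySuccEquiv (n h : ℕ) :
    History (n + 1) h ≃
      Σ s : Bool × Bool, Fin (h + 1 - s.1.toNat) × History n (h + s.2.toNat - s.1.toNat) :=
  (Equiv.sigmaFiberEquiv fun x : History (n + 1) h => lastStep n x.1.1).symm.trans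
    (Equiv.sigmaCongrRight fun s => lastStepFiberEquiv n h s.1 s.2)

/-! ### Counting -/

theorem History.eq_zero {h : ℕ} (x : History 0 h) : x.1 = (0, 0) := by
  have ht : x.1.1 = 0 := funext fun i => by
    by_contra hi
    have := x.2.isArcs.arc i hi
    omega
  refine Prod.ext ht (funext fun k => ?_)
  have := x.2.weight_le k
  rw [ht, spanCount, card_eq_zero.2 (filter_eq_empty_iff.2 fun i _ => by simp)] at this
  exact Nat.le_zero.1 this

instance History.subsingleton_zero (h : ℕ) : Subsingleton (History 0 h) :=
  ⟨fun x y => Subtype.ext (x.eq_zero.trans y.eq_zero.symm)⟩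

instance History.finite : ∀ n h, Finite (History n h)
  | 0, _ => inferInstance
  | n + 1, h =>
    have := History.finite n
    Finite.of_equiv _ (historySuccEquiv n h).symm

theorem card_history_zero (h : ℕ) : Nat.card (History 0 h) = if h = 0 then 1 else 0 := by
  split_ifs with h0
  · subst h0
    have : Nonempty (History 0 0) :=
      ⟨⟨(0, 0), ⟨fun i hi => absurd rfl hi, fun i j _ _ hj => absurd rfl hj⟩, rfl,
        fun k => Nat.zero_le _⟩⟩
    exact Nat.card_eq_one_iff_unique.2 ⟨inferInstance, this⟩
  · have : IsEmpty (History 0 h) :=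
      ⟨fun x => h0 (x.2.openCount_eq.symm.trans (by simp [openCount]))⟩
    exact Nat.card_of_isEmpty

theorem card_history_succ (n h : ℕ) :
    Nat.card (History (n + 1) h) =
      (h + 1) * Nat.card (History n h) + (h + 1) * Nat.card (History n (h + 1)) +
        h * Nat.card (History n (h - 1)) + h * Nat.card (History n h) := by
  rw [Nat.card_congr (historySuccEquiv n h), Nat.card_sigma]
  simp only [Nat.card_prod, Nat.card_eq_fintype_card, Fintype.card_fin, Fintype.sum_prod_type,
    Fintype.sum_bool, Bool.toNat_true, Bool.toNat_false, add_zero, add_tsub_cancel_right,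
    tsub_zero]
  ring

theorem choose_recurrence (n h : ℕ) :
    (h + 1) * n.choose h + (h + 1) * n.choose (h + 1) + h * n.choose (h - 1) + h * n.choose h =
      (n + 1) * (n + 1).choose h := by
  rcases h with _ | k
  · simp only [zero_add, Nat.choose_zero_right, Nat.choose_one_right]
    ring
  · have e₀ := Nat.add_one_mul_choose_eq n k
    have e₁ := Nat.add_one_mul_choose_eq n (k + 1)
    rw [Nat.choose_succ_succ'] at e₀ e₁ ⊢
    rw [add_tsub_cancel_right]
    linear_combination e₀.symm + e₁.symm

theorem card_history (n h : ℕ) : Nat.card (History n h) = n.factorial * n.choose h := by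
  induction n generalizing h with
  | zero => cases h <;> simp [card_history_zero]
  | succ n ih =>
    rw [card_history_succ, ih, ih, ih, Nat.factorial_succ]
    linear_combination n.factorial * choose_recurrence n h

/-- The number of decreasing weighted subexcedent functions of size `n` is `n!`. -/
theorem card_dwsf (n : ℕ) :
    Nat.card {p : (ℕ → ℕ) × (ℕ → ℕ) //
      IsSubexc n p.1 ∧ IsDecr n p.1 ∧ IsValidW n p.1 p.2} = n.factorial := by
  rw [Nat.card_congr (dwsfEquivHistory n), card_history, Nat.choose_zero_right, mul_one]
end
end

section
/- Let σ be a permutation of size n and let k = σ_j. Then k is a left-to-right maximum of σ if and only if σ_{j−1} < σ_j (with the convention σ_0 = 0) and tot_k(σ) = 0. -/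
open scoped Classical
noncomputable section

lemma pval_pos (n : ℕ) (σ : Equiv.Perm (Fin n)) (j : ℕ) (h1 : 1 ≤ j) (h2 : j ≤ n) :
    1 ≤ pval n σ j := by
  simp [pval, h1, h2]

lemma pval_inj (n : ℕ) (σ : Equiv.Perm (Fin n)) (a b : ℕ)
    (ha1 : 1 ≤ a) (ha2 : a ≤ n) (hb1 : 1 ≤ b) (hb2 : b ≤ n)
    (h : pval n σ a = pval n σ b) : a = b := by
  simp only [pval, dif_pos (And.intro ha1 ha2), dif_pos (And.intro hb1 hb2)] at h
  have := σ.injective (Fin.ext (by omega : ((σ ⟨a - 1, by omega⟩ : Fin n) : ℕ)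
    = ((σ ⟨b - 1, by omega⟩ : Fin n) : ℕ)))
  have h2 := congrArg Fin.val this
  simp only at h2
  omega

/-- Lemma: a value `k = σ_j` is a left-to-right maximum of `σ` if and only if
`σ_{j-1} < σ_j` (convention `σ_0 = 0`) and `tot_k σ = 0`. -/
theorem lr_max_iff (n : ℕ) (σ : Equiv.Perm (Fin n)) (j : ℕ) (h1 : 1 ≤ j) (h2 : j ≤ n) :
    (∀ j', 1 ≤ j' → j' < j → pval n σ j' < pval n σ j)
      ↔ (pval n σ (j - 1) < pval n σ j ∧ totk n σ (pval n σ j) = 0) := by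
  constructor
  · intro h
    constructor
    · rcases Nat.eq_or_lt_of_le h1 with h' | h'
      · have : pval n σ (j - 1) = 0 := by
          simp [pval]; omega
        have := pval_pos n σ j h1 h2
        omega
      · exact h (j - 1) (by omega) (by omega)
    · rw [totk, Finset.card_eq_zero, Finset.filter_eq_empty_iff]
      rintro ⟨a, b⟩ hab
      simp only [Finset.mem_product, Finset.mem_Icc] at hab
      rintro ⟨hlt, hc1, hc2, hc3⟩
      simp only at hlt hc1 hc2 hc3
      have hbj : b = j := pval_inj n σ b j hab.2.1 hab.2.2 h1 h2 hc3
      subst hbj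
      have := h a hab.1.1 (by omega)
      omega
  · rintro ⟨hprev, htot⟩
    by_contra hcon
    push_neg at hcon
    obtain ⟨j', hj'1, hj'2, hj'3⟩ := hcon
    -- pval j' > pval j, since ≠
    have hne : pval n σ j' ≠ pval n σ j := fun he =>
      absurd (pval_inj n σ j' j hj'1 (by omega) h1 h2 he) (by omega)
    have hgt : pval n σ j < pval n σ j' := by omega
    set P : ℕ → Prop := fun i => 1 ≤ i ∧ i < j ∧ pval n σ j < pval n σ i with hP
    have hPj' : P j' := ⟨hj'1, hj'2, hgt⟩
    have hi := Nat.findGreatest_spec (P := P) (m := j') (n := j - 1) (by omega) hPj'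
    set i := Nat.findGreatest P (j - 1) with hidef
    obtain ⟨hi1, hi2, hi3⟩ := hi
    have hi4 : i ≤ j - 1 := Nat.findGreatest_le _
    rcases Nat.eq_or_lt_of_le (show i + 1 ≤ j by omega) with heq | hlt
    · have : i = j - 1 := by omega
      rw [this] at hi3
      omega
    · -- i+1 < j, not P (i+1)
      have hnP : ¬ P (i + 1) := Nat.findGreatest_is_greatest (P := P) (n := j - 1) (k := i + 1) (by omega) (by omega)
      have h5 : ¬ (pval n σ j < pval n σ (i + 1)) := fun hlt' =>
        hnP ⟨by omega, by omega, hlt'⟩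
      have hne2 : pval n σ (i + 1) ≠ pval n σ j := fun he =>
        absurd (pval_inj n σ (i + 1) j (by omega) (by omega) h1 h2 he) (by omega)
      have h6 : pval n σ (i + 1) < pval n σ j := by omega
      have : (⟨i, j⟩ : ℕ × ℕ) ∈ ((Finset.Icc 1 n ×ˢ Finset.Icc 1 n).filter (fun p =>
          p.1 + 1 < p.2 ∧ pval n σ (p.1 + 1) < pval n σ p.2 ∧ pval n σ p.2 < pval n σ p.1 ∧
            pval n σ p.2 = pval n σ j)) := by
        simp only [Finset.mem_filter, Finset.mem_product, Finset.mem_Icc]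
        exact ⟨⟨⟨hi1, by omega⟩, ⟨h1, h2⟩⟩, hlt, h6, hi3, trivial⟩
      rw [totk, Finset.card_eq_zero] at htot
      simp [htot] at this
end
end

section
/- Let A and A' be two binary search trees with the same set of labels. Then A = A' if and only if for every interval I of values, the restriction of A to I and the restriction of A' to I have the same root. -/
open scoped Classical
noncomputable section

/-- Labeled binary trees. -/
inductive BT : Type
  | nil : BT
  | node : ℕ → BT → BT → BT
/-- The root label of a binary tree, if any. -/
def BT.root? : BT → Option ℕ
  | .nil => none
  | .node v _ _ => some v
/-- The set of labels of a binary tree. -/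
def BT.labels : BT → Finset ℕ
  | .nil => ∅
  | .node v l r => insert v (l.labels ∪ r.labels)
/-- The binary-search-tree property. -/
def BT.IsBST : BT → Prop
  | .nil => True
  | .node v l r =>
      (∀ y ∈ l.labels, y < v) ∧ (∀ y ∈ r.labels, v < y) ∧ l.IsBST ∧ r.IsBST
/-- Restriction of a binary search tree to the interval of values `[a, b]`. -/
def BT.restrict (a b : ℕ) : BT → BT
  | .nil => .nil
  | .node v l r =>
      if v < a then r.restrict a b
      else if b < v then l.restrict a b
      else .node v (l.restrict a b) (r.restrict a b)

lemma BT.eq_nil_of_labels_empty : ∀ t : BT, t.labels = ∅ → t = .nil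
  | .nil, _ => rfl
  | .node v l r, h => by simp [BT.labels] at h

lemma BT.restrict_eq_self (a b : ℕ) : ∀ t : BT, (∀ x ∈ t.labels, a ≤ x ∧ x ≤ b) →
    t.restrict a b = t
  | .nil, _ => rfl
  | .node v l r, h => by
      have hv := h v (by simp [BT.labels])
      have hl := BT.restrict_eq_self a b l (fun x hx => h x (by simp [BT.labels, hx]))
      have hr := BT.restrict_eq_self a b r (fun x hx => h x (by simp [BT.labels, hx]))
      simp [BT.restrict, Nat.not_lt.mpr hv.1, Nat.not_lt.mpr hv.2, hl, hr]

lemma BT.restrict_nil_of_lt (a b : ℕ) : ∀ t : BT, (∀ x ∈ t.labels, x < a) →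
    t.restrict a b = .nil
  | .nil, _ => rfl
  | .node v l r, h => by
      have hv := h v (by simp [BT.labels])
      have hr := BT.restrict_nil_of_lt a b r (fun x hx => h x (by simp [BT.labels, hx]))
      simp [BT.restrict, hv, hr]

lemma BT.restrict_nil_of_gt (a b : ℕ) : ∀ t : BT, (∀ x ∈ t.labels, b < x) →
    t.restrict a b = .nil
  | .nil, _ => rfl
  | .node v l r, h => by
      have hv := h v (by simp [BT.labels])
      have hl := BT.restrict_nil_of_gt a b l (fun x hx => h x (by simp [BT.labels, hx]))
      have hr := BT.restrict_nil_of_gt a b r (fun x hx => h x (by simp [BT.labels, hx]))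
      by_cases hva : v < a
      · simp [BT.restrict, hva, hr]
      · simp [BT.restrict, hva, hv, hl]

lemma BT.restrict_cap (a b c : ℕ) : ∀ t : BT, (∀ x ∈ t.labels, x ≤ c) →
    t.restrict a b = t.restrict a (min b c)
  | .nil, _ => rfl
  | .node v l r, h => by
      have hv := h v (by simp [BT.labels])
      have hl := BT.restrict_cap a b c l (fun x hx => h x (by simp [BT.labels, hx]))
      have hr := BT.restrict_cap a b c r (fun x hx => h x (by simp [BT.labels, hx]))
      have hb : b < v ↔ min b c < v := by
        constructor
        · intro hb; exact lt_of_le_of_lt (min_le_left _ _) hb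
        · intro hb; exact (min_lt_iff.mp hb).resolve_right (not_lt.mpr hv)
      by_cases hva : v < a
      · simp [BT.restrict, hva, hr]
      · by_cases hbv : b < v
        · simp [BT.restrict, hva, hbv, hb.mp hbv, hl]
        · simp [BT.restrict, hva, hbv, fun hh => hbv (hb.mpr hh), not_lt_of_ge hv, hl, hr]

lemma BT.restrict_floor (a b c : ℕ) : ∀ t : BT, (∀ x ∈ t.labels, c ≤ x) →
    t.restrict a b = t.restrict (max a c) b
  | .nil, _ => rfl
  | .node v l r, h => by
      have hv := h v (by simp [BT.labels])
      have hl := BT.restrict_floor a b c l (fun x hx => h x (by simp [BT.labels, hx]))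
      have hr := BT.restrict_floor a b c r (fun x hx => h x (by simp [BT.labels, hx]))
      have ha : v < a ↔ v < max a c := by
        constructor
        · intro hh; exact lt_of_lt_of_le hh (le_max_left _ _)
        · intro hh; exact (lt_max_iff.mp hh).resolve_right (not_lt.mpr hv)
      by_cases hva : v < a
      · simp [BT.restrict, hva, ha.mp hva, hr]
      · have hva' : ¬ v < max a c := fun hh => hva (ha.mpr hh)
        by_cases hbv : b < v
        · simp [BT.restrict, hva, hva', hbv, hl]
        · simp [BT.restrict, hva, hva', hbv, hl, hr]

lemma BT.labels_left {v : ℕ} {l r : BT} (h : (BT.node v l r).IsBST) :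
    l.labels = (BT.node v l r).labels.filter (· < v) := by
  obtain ⟨h1, h2, _, _⟩ := h
  ext x
  simp only [Finset.mem_filter, BT.labels, Finset.mem_insert, Finset.mem_union]
  constructor
  · intro hx; exact ⟨Or.inr (Or.inl hx), h1 x hx⟩
  · rintro ⟨(rfl | hx | hx), hlt⟩
    · exact absurd hlt (lt_irrefl x)
    · exact hx
    · exact absurd hlt (not_lt.mpr (le_of_lt (h2 x hx)))

lemma BT.labels_right {v : ℕ} {l r : BT} (h : (BT.node v l r).IsBST) :
    r.labels = (BT.node v l r).labels.filter (v < ·) := by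
  obtain ⟨h1, h2, _, _⟩ := h
  ext x
  simp only [Finset.mem_filter, BT.labels, Finset.mem_insert, Finset.mem_union]
  constructor
  · intro hx; exact ⟨Or.inr (Or.inr hx), h2 x hx⟩
  · rintro ⟨(rfl | hx | hx), hlt⟩
    · exact absurd hlt (lt_irrefl x)
    · exact absurd hlt (not_lt.mpr (le_of_lt (h1 x hx)))
    · exact hx

lemma BT.main_aux : ∀ A A' : BT, A.IsBST → A'.IsBST → A.labels = A'.labels →
    (∀ a b : ℕ, (A.restrict a b).root? = (A'.restrict a b).root?) → A = A'
  | .nil, A', _, _, h, _ => (BT.eq_nil_of_labels_empty A' (by simpa [BT.labels] using h.symm)).symm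
  | .node v l r, .nil, _, _, h, _ => by simp [BT.labels] at h
  | .node v l r, .node v' l' r', hA, hA', h, hroot => by
      -- roots equal : take big interval
      set B := ((BT.node v l r).labels).sup id with hB
      have hcov : ∀ x ∈ (BT.node v l r).labels, 0 ≤ x ∧ x ≤ B :=
        fun x hx => ⟨Nat.zero_le x, Finset.le_sup (f := id) hx⟩
      have hcov' : ∀ x ∈ (BT.node v' l' r').labels, 0 ≤ x ∧ x ≤ B :=
        fun x hx => ⟨Nat.zero_le x, by rw [← h] at hx; exact Finset.le_sup (f := id) hx⟩
      have hr0 := hroot 0 B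
      rw [BT.restrict_eq_self 0 B _ hcov, BT.restrict_eq_self 0 B _ hcov'] at hr0
      have hvv : v = v' := by simpa [BT.root?] using hr0
      subst hvv
      have hll : l.labels = l'.labels := by
        rw [BT.labels_left hA, BT.labels_left hA', h]
      have hrr : r.labels = r'.labels := by
        rw [BT.labels_right hA, BT.labels_right hA', h]
      obtain ⟨h1, h2, h3, h4⟩ := hA
      obtain ⟨h1', h2', h3', h4'⟩ := hA'
      -- left subtrees
      have hlroot : ∀ a b : ℕ, (l.restrict a b).root? = (l'.restrict a b).root? := by
        intro a b
        by_cases hv0 : v = 0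
        · subst hv0
          have : l.labels = ∅ := Finset.eq_empty_of_forall_notMem
            (fun x hx => Nat.not_lt_zero x (h1 x hx))
          rw [BT.eq_nil_of_labels_empty l this,
              BT.eq_nil_of_labels_empty l' (by rw [← hll]; exact this)]
        · have hv1 : 1 ≤ v := Nat.one_le_iff_ne_zero.mpr hv0
          have hroot' := hroot a (min b (v - 1))
          have hlle : ∀ x ∈ l.labels, x ≤ v - 1 :=
            fun x hx => Nat.le_sub_one_of_lt (h1 x hx)
          have hlle' : ∀ x ∈ l'.labels, x ≤ v - 1 := by rw [← hll]; exact hlle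
          have hbv : min b (v - 1) < v := lt_of_le_of_lt (min_le_right _ _)
            (Nat.sub_lt (Nat.lt_of_lt_of_le Nat.zero_lt_one hv1) Nat.zero_lt_one)
          by_cases hva : v < a
          · -- both sides are nil
            have hlnil : l.restrict a b = .nil := BT.restrict_nil_of_lt a b l
              (fun x hx => lt_trans (h1 x hx) hva)
            have hlnil' : l'.restrict a b = .nil := BT.restrict_nil_of_lt a b l'
              (fun x hx => by rw [← hll] at hx; exact lt_trans (h1 x hx) hva)
            rw [hlnil, hlnil']
          · have e1 : (BT.node v l r).restrict a (min b (v-1)) = l.restrict a (min b (v-1)) := by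
              simp [BT.restrict, hva, hbv]
            have e1' : (BT.node v l' r').restrict a (min b (v-1)) = l'.restrict a (min b (v-1)) := by
              simp [BT.restrict, hva, hbv]
            rw [e1, e1'] at hroot'
            rw [BT.restrict_cap a b (v-1) l hlle, BT.restrict_cap a b (v-1) l' hlle']
            exact hroot'
      -- right subtrees
      have hrroot : ∀ a b : ℕ, (r.restrict a b).root? = (r'.restrict a b).root? := by
        intro a b
        have hroot' := hroot (max a (v + 1)) b
        have hrge : ∀ x ∈ r.labels, v + 1 ≤ x := fun x hx => h2 x hx
        have hrge' : ∀ x ∈ r'.labels, v + 1 ≤ x := by rw [← hrr]; exact hrge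
        have hva : v < max a (v + 1) := lt_of_lt_of_le (Nat.lt_succ_self v) (le_max_right _ _)
        by_cases hbv : b < v
        · have hrnil : r.restrict a b = .nil := BT.restrict_nil_of_gt a b r
            (fun x hx => lt_trans hbv (h2 x hx))
          have hrnil' : r'.restrict a b = .nil := BT.restrict_nil_of_gt a b r'
            (fun x hx => by rw [← hrr] at hx; exact lt_trans hbv (h2 x hx))
          rw [hrnil, hrnil']
        · have e1 : (BT.node v l r).restrict (max a (v+1)) b = r.restrict (max a (v+1)) b := by
            simp [BT.restrict, hva]
          have e1' : (BT.node v l' r').restrict (max a (v+1)) b = r'.restrict (max a (v+1)) b := by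
            simp [BT.restrict, hva]
          rw [e1, e1'] at hroot'
          rw [BT.restrict_floor a b (v+1) r hrge, BT.restrict_floor a b (v+1) r' hrge']
          exact hroot'
      rw [BT.main_aux l l' h3 h3' hll hlroot, BT.main_aux r r' h4 h4' hrr hrroot]

/-- Lemma: two binary search trees with the same set of labels are equal if and only if
their restrictions to every interval of values have the same root. -/
theorem bst_eq_iff_restriction_roots (A A' : BT) (hA : A.IsBST) (hA' : A'.IsBST)
    (h : A.labels = A'.labels) :
    A = A' ↔ ∀ a b : ℕ, (A.restrict a b).root? = (A'.restrict a b).root? := by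
  constructor
  · rintro rfl a b; rfl
  · exact BT.main_aux A A' hA hA' h
end
end
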